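/- arXiv:2209.03667 — 5 statements merged into one kernel-verified Lean document; each statement's English description precedes it below -/
import Mathlib

section
/- Eichler criterion: Let Γ be an even nondegenerate lattice containing U ⊕ U as an orthogonal direct summand (i.e. Γ ≅ U ⊕ U ⊕ Γ'' for some lattice Γ''). Let v, w ∈ Γ be nonzero elements satisfying: (1) q(v) = q(w); (2) div(v) = div(w) =: r; and (3) v/r and w/r have the same image in the discriminant group A_Γ = Γ^∨/Γ. Then there exists an isometry φ ∈ O(Γ) with φ(v) = w such that the induced action of φ on A_Γ is the identity. -/
section EichlerAux

variable {Γ : Type*} [AddCommGroup Γ]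

/-- Isometries together with the discriminant-triviality property. -/
def Sp (B : Γ →ₗ[ℤ] Γ →ₗ[ℤ] ℤ) (φ : Γ ≃ₗ[ℤ] Γ) : Prop :=
  (∀ x y, B (φ x) (φ y) = B x y) ∧
  ∀ (x : Γ) (m : ℤ), (∀ z, m ∣ B x z) → ∃ u : Γ, φ x - x = m • u

def Reaches (B : Γ →ₗ[ℤ] Γ →ₗ[ℤ] ℤ) (v v' : Γ) : Prop :=
  ∃ φ : Γ ≃ₗ[ℤ] Γ, Sp B φ ∧ φ v = v'

theorem bil1 (B : Γ →ₗ[ℤ] Γ →ₗ[ℤ] ℤ) (x a e z : Γ) (s q : ℤ) :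
    B (x + s • a - q • e) z = B x z + s * B a z - q * B e z := by
  simp [map_add, map_sub, map_smul]

theorem bil2 (B : Γ →ₗ[ℤ] Γ →ₗ[ℤ] ℤ) (z x a e : Γ) (s q : ℤ) :
    B z (x + s • a - q • e) = B z x + s * B z a - q * B z e := by
  simp [map_add, map_sub, map_smul]

theorem sp_trans {B : Γ →ₗ[ℤ] Γ →ₗ[ℤ] ℤ} {φ ψ : Γ ≃ₗ[ℤ] Γ}
    (hφ : Sp B φ) (hψ : Sp B ψ) : Sp B (φ.trans ψ) := by
  constructor
  · intro x y
    simpa [LinearEquiv.trans_apply] using (hψ.1 (φ x) (φ y)).trans (hφ.1 x y)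
  · intro x m hx
    obtain ⟨u₁, hu₁⟩ := hφ.2 x m hx
    have hx' : ∀ z, m ∣ B (φ x) z := by
      intro z
      have h1 := hφ.1 x (φ.symm z)
      rw [LinearEquiv.apply_symm_apply] at h1
      rw [h1]
      exact hx _
    obtain ⟨u₂, hu₂⟩ := hψ.2 (φ x) m hx'
    refine ⟨u₂ + u₁, ?_⟩
    have h : ψ (φ x) - x = (ψ (φ x) - φ x) + (φ x - x) := by abel
    rw [LinearEquiv.trans_apply, h, hu₁, hu₂]; module

theorem sp_symm {B : Γ →ₗ[ℤ] Γ →ₗ[ℤ] ℤ} {φ : Γ ≃ₗ[ℤ] Γ}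
    (hφ : Sp B φ) : Sp B φ.symm := by
  constructor
  · intro x y
    have h := hφ.1 (φ.symm x) (φ.symm y)
    rw [φ.apply_symm_apply, φ.apply_symm_apply] at h
    exact h.symm
  · intro x m hx
    have hy : ∀ z, m ∣ B (φ.symm x) z := by
      intro z
      have h := hφ.1 (φ.symm x) z
      rw [φ.apply_symm_apply] at h
      rw [← h]
      exact hx _
    obtain ⟨u, hu⟩ := hφ.2 (φ.symm x) m hy
    refine ⟨-u, ?_⟩
    have h2 : φ.symm x - x = -(φ (φ.symm x) - φ.symm x) := by
      rw [φ.apply_symm_apply]; abel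
    rw [h2, hu]; module


theorem sp_transvection (B : Γ →ₗ[ℤ] Γ →ₗ[ℤ] ℤ) (hsymm : ∀ x y, B x y = B y x)
    (e a : Γ) (n : ℤ) (he : B e e = 0) (hea : B e a = 0) (haa : B a a = 2 * n) :
    ∃ φ : Γ ≃ₗ[ℤ] Γ, Sp B φ ∧
      ∀ x, φ x = x + B e x • a - (B a x + n * B e x) • e := by
  have hae : B a e = 0 := (hsymm a e).trans hea
  set F : Γ →ₗ[ℤ] Γ :=
    LinearMap.id + (B e).smulRight a - (B a + n • B e).smulRight e with hFdef
  set G : Γ →ₗ[ℤ] Γ :=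
    LinearMap.id - (B e).smulRight a - (n • B e - B a).smulRight e with hGdef
  have hFx : ∀ x, F x = x + B e x • a - (B a x + n * B e x) • e := by
    intro x
    simp [hFdef, LinearMap.smulRight_apply, LinearMap.add_apply, LinearMap.sub_apply,
      LinearMap.smul_apply, smul_eq_mul]
  have hGx : ∀ x, G x = x + (-(B e x)) • a - (n * B e x - B a x) • e := by
    intro x
    simp only [hGdef, LinearMap.sub_apply, LinearMap.id_apply, LinearMap.smulRight_apply,
      LinearMap.smul_apply, smul_eq_mul, neg_smul]
    module
  have hBeF : ∀ x, B e (F x) = B e x := by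
    intro x; rw [hFx x, bil2, hea, he]; ring
  have hBaF : ∀ x, B a (F x) = B a x + 2 * n * B e x := by
    intro x; rw [hFx x, bil2, haa, hae]; ring
  have hBeG : ∀ x, B e (G x) = B e x := by
    intro x; rw [hGx x, bil2, hea, he]; ring
  have hBaG : ∀ x, B a (G x) = B a x - 2 * n * B e x := by
    intro x; rw [hGx x, bil2, haa, hae]; ring
  have hGF : ∀ x, G (F x) = x := by
    intro x
    rw [hGx (F x), hBeF, hBaF, hFx x]
    module
  have hFG : ∀ x, F (G x) = x := by
    intro x
    rw [hFx (G x), hBeG, hBaG, hGx x]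
    module
  refine ⟨LinearEquiv.ofLinear F G (by ext x; simpa using hFG x) (by ext x; simpa using hGF x),
    ⟨?_, ?_⟩, fun x => by rw [LinearEquiv.ofLinear_apply]; exact hFx x⟩
  · intro x y
    rw [LinearEquiv.ofLinear_apply, LinearEquiv.ofLinear_apply, hFx x, bil1, hBaF y, hBeF y,
      hFx y, bil2, hsymm x a, hsymm x e]
    ring
  · intro x m hx
    obtain ⟨k₁, hk₁⟩ := hx e
    obtain ⟨k₂, hk₂⟩ := hx a
    refine ⟨k₁ • a - (k₂ + n * k₁) • e, ?_⟩
    rw [LinearEquiv.ofLinear_apply, hFx x, (hsymm e x).trans hk₁, (hsymm a x).trans hk₂]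
    module


theorem sp_flip (B : Γ →ₗ[ℤ] Γ →ₗ[ℤ] ℤ) (hsymm : ∀ x y, B x y = B y x)
    (e₁ f₁ : Γ) (he₁ : B e₁ e₁ = 0) (hf₁ : B f₁ f₁ = 0) (he₁f₁ : B e₁ f₁ = 1) :
    ∃ φ : Γ ≃ₗ[ℤ] Γ, Sp B φ ∧
      ∀ x, φ x = x + (-(2 * B f₁ x)) • e₁ - (2 * B e₁ x) • f₁ := by
  have hf₁e₁ : B f₁ e₁ = 1 := (hsymm f₁ e₁).trans he₁f₁
  set F : Γ →ₗ[ℤ] Γ :=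
    LinearMap.id - ((2 : ℤ) • B f₁).smulRight e₁ - ((2 : ℤ) • B e₁).smulRight f₁ with hFdef
  have hFx : ∀ x, F x = x + (-(2 * B f₁ x)) • e₁ - (2 * B e₁ x) • f₁ := by
    intro x
    simp only [hFdef, LinearMap.sub_apply, LinearMap.id_apply, LinearMap.smulRight_apply,
      LinearMap.smul_apply, smul_eq_mul, neg_smul]
    module
  have hBf₁F : ∀ x, B f₁ (F x) = -(B f₁ x) := by
    intro x; rw [hFx x, bil2, hf₁e₁, hf₁]; ring
  have hBe₁F : ∀ x, B e₁ (F x) = -(B e₁ x) := by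
    intro x; rw [hFx x, bil2, he₁, he₁f₁]; ring
  have hFF : ∀ x, F (F x) = x := by
    intro x
    rw [hFx (F x), hBf₁F, hBe₁F, hFx x]
    module
  refine ⟨LinearEquiv.ofLinear F F (by ext x; simpa using hFF x) (by ext x; simpa using hFF x),
    ⟨?_, ?_⟩, fun x => by rw [LinearEquiv.ofLinear_apply]; exact hFx x⟩
  · intro x y
    rw [LinearEquiv.ofLinear_apply, LinearEquiv.ofLinear_apply, hFx x, bil1, hBf₁F y, hBe₁F y,
      hFx y, bil2, hsymm x e₁, hsymm x f₁]
    ring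
  · intro x m hx
    obtain ⟨k₁, hk₁⟩ := hx f₁
    obtain ⟨k₂, hk₂⟩ := hx e₁
    refine ⟨(-(2 * k₁)) • e₁ - (2 * k₂) • f₁, ?_⟩
    rw [LinearEquiv.ofLinear_apply, hFx x, (hsymm f₁ x).trans hk₁, (hsymm e₁ x).trans hk₂]
    module

theorem reaches_refl (B : Γ →ₗ[ℤ] Γ →ₗ[ℤ] ℤ) (v : Γ) : Reaches B v v :=
  ⟨LinearEquiv.refl ℤ Γ, ⟨fun x y => rfl, fun x m _ => ⟨0, by simp⟩⟩, rfl⟩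

theorem reaches_move (B : Γ →ₗ[ℤ] Γ →ₗ[ℤ] ℤ) (hsymm : ∀ x y, B x y = B y x)
    {v v' : Γ} (h : Reaches B v v') (e a : Γ) (n : ℤ)
    (he : B e e = 0) (hea : B e a = 0) (haa : B a a = 2 * n) :
    Reaches B v (v' + B e v' • a - (B a v' + n * B e v') • e) := by
  obtain ⟨φ, hφ, hv⟩ := h
  obtain ⟨ψ, hψ, hψx⟩ := sp_transvection B hsymm e a n he hea haa
  exact ⟨φ.trans ψ, sp_trans hφ hψ, by rw [LinearEquiv.trans_apply, hv, hψx]⟩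

theorem reaches_flip (B : Γ →ₗ[ℤ] Γ →ₗ[ℤ] ℤ) (hsymm : ∀ x y, B x y = B y x)
    {v v' : Γ} (h : Reaches B v v') (e₁ f₁ : Γ)
    (he₁ : B e₁ e₁ = 0) (hf₁ : B f₁ f₁ = 0) (he₁f₁ : B e₁ f₁ = 1) :
    Reaches B v (v' + (-(2 * B f₁ v')) • e₁ - (2 * B e₁ v') • f₁) := by
  obtain ⟨φ, hφ, hv⟩ := h
  obtain ⟨ψ, hψ, hψx⟩ := sp_flip B hsymm e₁ f₁ he₁ hf₁ he₁f₁
  exact ⟨φ.trans ψ, sp_trans hφ hψ, by rw [LinearEquiv.trans_apply, hv, hψx]⟩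


theorem reduce_canonical (B : Γ →ₗ[ℤ] Γ →ₗ[ℤ] ℤ)
    (hsymm : ∀ x y, B x y = B y x)
    (hnondeg : ∀ x, (∀ y, B x y = 0) → x = 0)
    (heven : ∀ x, 2 ∣ B x x)
    (e₁ f₁ e₂ f₂ : Γ)
    (he₁ : B e₁ e₁ = 0) (hf₁ : B f₁ f₁ = 0) (he₁f₁ : B e₁ f₁ = 1)
    (he₂ : B e₂ e₂ = 0) (hf₂ : B f₂ f₂ = 0) (he₂f₂ : B e₂ f₂ = 1)
    (h₁₂ : B e₁ e₂ = 0) (h₁₂' : B e₁ f₂ = 0) (h₁₂'' : B f₁ e₂ = 0) (h₁₂''' : B f₁ f₂ = 0)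
    (hsplit : ∀ x : Γ, ∃ (a b c d : ℤ) (u : Γ),
      B e₁ u = 0 ∧ B f₁ u = 0 ∧ B e₂ u = 0 ∧ B f₂ u = 0 ∧
      x = a • e₁ + b • f₁ + c • e₂ + d • f₂ + u)
    (v : Γ) (hv : v ≠ 0)
    (r : ℤ) (hrpos : 0 < r)
    (hdv : ∀ y, r ∣ B v y) (hdv' : ∀ s : ℤ, (∀ y, s ∣ B v y) → s ∣ r) :
    ∃ v' : Γ, Reaches B v v' ∧ B v' f₁ = r ∧ B v' f₂ = 0 ∧ B v' e₂ = 0 := by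
  classical
  have hf₁e₁ : B f₁ e₁ = 1 := (hsymm f₁ e₁).trans he₁f₁
  have hf₂e₂ : B f₂ e₂ = 1 := (hsymm f₂ e₂).trans he₂f₂
  have he₂e₁ : B e₂ e₁ = 0 := (hsymm e₂ e₁).trans h₁₂
  have hf₂e₁ : B f₂ e₁ = 0 := (hsymm f₂ e₁).trans h₁₂'
  have he₂f₁ : B e₂ f₁ = 0 := (hsymm e₂ f₁).trans h₁₂''
  have hf₂f₁ : B f₂ f₁ = 0 := (hsymm f₂ f₁).trans h₁₂'''
  -- move: t(f₁, γ e₂) : c ← c + aγ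
  have move_c : ∀ v' : Γ, Reaches B v v' → ∀ γ : ℤ, ∃ v₂ : Γ, Reaches B v v₂ ∧
      B v₂ f₁ = B v' f₁ ∧ B v₂ f₂ = B v' f₂ + B v' f₁ * γ ∧ B v₂ e₂ = B v' e₂ ∧
      B v₂ e₁ = B v' e₁ - γ * B v' e₂ ∧
      (∀ l, B e₂ l = 0 → B f₁ l = 0 → B v₂ l = B v' l) := by
    intro v' hR γ
    refine ⟨_, reaches_move B hsymm hR f₁ (γ • e₂) 0 hf₁
      (by simp [h₁₂'']) (by simp [he₂]), ?_, ?_, ?_, ?_, ?_⟩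
    · rw [bil1]; simp [he₂f₁, hf₁]
    · rw [bil1]
      simp only [map_smul, LinearMap.smul_apply, smul_eq_mul, he₂f₂, h₁₂''', hsymm f₁ v']
      ring
    · rw [bil1]; simp [he₂, h₁₂'']
    · rw [bil1]
      simp only [map_smul, LinearMap.smul_apply, smul_eq_mul, he₂e₁, hf₁e₁, hsymm e₂ v']
      ring
    · intro l hle₂ hlf₁
      rw [bil1]
      simp only [map_smul, LinearMap.smul_apply, smul_eq_mul, hle₂, hlf₁]
      ring
  -- move: t(f₁, δ f₂) : d ← d + aδ
  have move_d : ∀ v' : Γ, Reaches B v v' → ∀ δ : ℤ, ∃ v₂ : Γ, Reaches B v v₂ ∧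
      B v₂ f₁ = B v' f₁ ∧ B v₂ f₂ = B v' f₂ ∧ B v₂ e₂ = B v' e₂ + B v' f₁ * δ ∧
      B v₂ e₁ = B v' e₁ - δ * B v' f₂ ∧
      (∀ l, B f₂ l = 0 → B f₁ l = 0 → B v₂ l = B v' l) := by
    intro v' hR δ
    refine ⟨_, reaches_move B hsymm hR f₁ (δ • f₂) 0 hf₁
      (by simp [h₁₂''']) (by simp [hf₂]), ?_, ?_, ?_, ?_, ?_⟩
    · rw [bil1]; simp [hf₂f₁, hf₁]
    · rw [bil1]; simp [hf₂, h₁₂''']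
    · rw [bil1]
      simp only [map_smul, LinearMap.smul_apply, smul_eq_mul, hf₂e₂, h₁₂'', hsymm f₁ v']
      ring
    · rw [bil1]
      simp only [map_smul, LinearMap.smul_apply, smul_eq_mul, hf₂e₁, hf₁e₁, hsymm f₂ v']
      ring
    · intro l hlf₂ hlf₁
      rw [bil1]
      simp only [map_smul, LinearMap.smul_apply, smul_eq_mul, hlf₂, hlf₁]
      ring
  -- move: t(f₂, k e₁) : a ← a + ck
  have move_ac : ∀ v' : Γ, Reaches B v v' → ∀ k : ℤ, ∃ v₂ : Γ, Reaches B v v₂ ∧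
      B v₂ f₁ = B v' f₁ + B v' f₂ * k ∧ B v₂ f₂ = B v' f₂ ∧
      B v₂ e₂ = B v' e₂ - k * B v' e₁ ∧ B v₂ e₁ = B v' e₁ ∧
      (∀ l, B e₁ l = 0 → B f₂ l = 0 → B v₂ l = B v' l) := by
    intro v' hR k
    refine ⟨_, reaches_move B hsymm hR f₂ (k • e₁) 0 hf₂
      (by simp [hf₂e₁]) (by simp [he₁]), ?_, ?_, ?_, ?_, ?_⟩
    · rw [bil1]
      simp only [map_smul, LinearMap.smul_apply, smul_eq_mul, he₁f₁, hf₂f₁, hsymm f₂ v']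
      ring
    · rw [bil1]; simp [h₁₂', hf₂]
    · rw [bil1]
      simp only [map_smul, LinearMap.smul_apply, smul_eq_mul, h₁₂, hf₂e₂, hsymm e₁ v']
      ring
    · rw [bil1]; simp [he₁, hf₂e₁]
    · intro l hle₁ hlf₂
      rw [bil1]
      simp only [map_smul, LinearMap.smul_apply, smul_eq_mul, hle₁, hlf₂]
      ring
  -- move: t(e₂, k e₁) : a ← a + dk
  have move_ad : ∀ v' : Γ, Reaches B v v' → ∀ k : ℤ, ∃ v₂ : Γ, Reaches B v v₂ ∧
      B v₂ f₁ = B v' f₁ + B v' e₂ * k ∧ B v₂ f₂ = B v' f₂ - k * B v' e₁ ∧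
      B v₂ e₂ = B v' e₂ ∧ B v₂ e₁ = B v' e₁ ∧
      (∀ l, B e₁ l = 0 → B e₂ l = 0 → B v₂ l = B v' l) := by
    intro v' hR k
    refine ⟨_, reaches_move B hsymm hR e₂ (k • e₁) 0 he₂
      (by simp [he₂e₁]) (by simp [he₁]), ?_, ?_, ?_, ?_, ?_⟩
    · rw [bil1]
      simp only [map_smul, LinearMap.smul_apply, smul_eq_mul, he₁f₁, he₂f₁, hsymm e₂ v']
      ring
    · rw [bil1]
      simp only [map_smul, LinearMap.smul_apply, smul_eq_mul, h₁₂', he₂f₂, hsymm e₁ v']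
      ring
    · rw [bil1]; simp [h₁₂, he₂]
    · rw [bil1]; simp [he₁, he₂e₁]
    · intro l hle₁ hle₂
      rw [bil1]
      simp only [map_smul, LinearMap.smul_apply, smul_eq_mul, hle₁, hle₂]
      ring
  -- move: t(e₁, f₂)
  have move7 : ∀ v' : Γ, Reaches B v v' → ∃ v₂ : Γ, Reaches B v v₂ ∧
      B v₂ f₁ = B v' f₁ - B v' f₂ ∧ B v₂ f₂ = B v' f₂ ∧
      B v₂ e₂ = B v' e₂ + B v' e₁ ∧ B v₂ e₁ = B v' e₁ := by
    intro v' hR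
    refine ⟨_, reaches_move B hsymm hR e₁ f₂ 0 he₁ h₁₂' (by simpa using hf₂), ?_, ?_, ?_, ?_⟩
    · rw [bil1]
      simp only [smul_eq_mul, hf₂f₁, he₁f₁, hsymm f₂ v']
      ring
    · rw [bil1]; simp [hf₂, h₁₂']
    · rw [bil1]
      simp only [smul_eq_mul, hf₂e₂, h₁₂, hsymm e₁ v']
      ring
    · rw [bil1]; simp [hf₂e₁, he₁]
  -- move: t(e₁, e₂)
  have move8 : ∀ v' : Γ, Reaches B v v' → ∃ v₂ : Γ, Reaches B v v₂ ∧
      B v₂ f₁ = B v' f₁ - B v' e₂ ∧ B v₂ f₂ = B v' f₂ + B v' e₁ ∧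
      B v₂ e₂ = B v' e₂ ∧ B v₂ e₁ = B v' e₁ := by
    intro v' hR
    refine ⟨_, reaches_move B hsymm hR e₁ e₂ 0 he₁ h₁₂ (by simpa using he₂), ?_, ?_, ?_, ?_⟩
    · rw [bil1]
      simp only [smul_eq_mul, he₂f₁, he₁f₁, hsymm e₂ v']
      ring
    · rw [bil1]
      simp only [smul_eq_mul, he₂f₂, h₁₂', hsymm e₁ v']
      ring
    · rw [bil1]; simp [he₂, h₁₂]
    · rw [bil1]; simp [he₂e₁, he₁]
  -- move: t(e₁, l) for l orthogonal to the two planes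
  have move10 : ∀ v' : Γ, Reaches B v v' → ∀ (l : Γ) (n : ℤ),
      B e₁ l = 0 → B f₁ l = 0 → B e₂ l = 0 → B f₂ l = 0 → B l l = 2 * n →
      ∃ v₂ : Γ, Reaches B v v₂ ∧
      B v₂ f₁ = B v' f₁ - B v' l - n * B v' e₁ ∧ B v₂ f₂ = B v' f₂ ∧
      B v₂ e₂ = B v' e₂ ∧ B v₂ e₁ = B v' e₁ := by
    intro v' hR l n hl1 hl2 hl3 hl4 hll
    refine ⟨_, reaches_move B hsymm hR e₁ l n he₁ hl1 hll, ?_, ?_, ?_, ?_⟩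
    · rw [bil1]
      simp only [smul_eq_mul, (hsymm l f₁).trans hl2, he₁f₁, hsymm l v', hsymm e₁ v']
      ring
    · rw [bil1]; simp [(hsymm l f₂).trans hl4, h₁₂']
    · rw [bil1]; simp [(hsymm l e₂).trans hl3, h₁₂]
    · rw [bil1]; simp [(hsymm l e₁).trans hl1, he₁]
  -- move: flip of U₁
  have move11 : ∀ v' : Γ, Reaches B v v' → ∃ v₂ : Γ, Reaches B v v₂ ∧
      B v₂ f₁ = -(B v' f₁) ∧ B v₂ f₂ = B v' f₂ ∧ B v₂ e₂ = B v' e₂ := by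
    intro v' hR
    refine ⟨_, reaches_flip B hsymm hR e₁ f₁ he₁ hf₁ he₁f₁, ?_, ?_, ?_⟩
    · rw [bil1]
      simp only [smul_eq_mul, he₁f₁, hf₁, hsymm f₁ v', hsymm e₁ v']
      ring
    · rw [bil1]; simp [h₁₂', h₁₂''']
    · rw [bil1]; simp [h₁₂, h₁₂'']
  -- the set of achievable nonzero values of |B v' f₁|
  set NS : Set ℕ :=
    {n : ℕ | ∃ v' : Γ, Reaches B v v' ∧ (B v' f₁).natAbs = n ∧ B v' f₁ ≠ 0} with hNSdef
  -- Step A : NS is nonempty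
  have hNS : NS.Nonempty := by
    by_cases ha : B v f₁ = 0
    · by_cases hc : B v f₂ = 0
      · by_cases hd : B v e₂ = 0
        · by_cases hb : B v e₁ = 0
          · have hex : ∃ z, B v z ≠ 0 := by
              by_contra h
              push_neg at h
              exact hv (hnondeg v h)
            obtain ⟨z, hz⟩ := hex
            obtain ⟨za, zb, zc, zd, uz, hz1, hz2, hz3, hz4, hzeq⟩ := hsplit z
            have huz : B v uz ≠ 0 := by
              intro h
              apply hz
              rw [hzeq]
              simp only [map_add, map_smul, smul_eq_mul]
              rw [ha, hb, hc, hd, h]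
              ring
            obtain ⟨n, hn⟩ := heven uz
            obtain ⟨v₂, hR₂, h2f₁, -, -, -⟩ :=
              move10 v (reaches_refl B v) uz n hz1 hz2 hz3 hz4 hn
            refine ⟨_, v₂, hR₂, rfl, ?_⟩
            rw [h2f₁, ha, hb]
            simpa using huz
          · obtain ⟨v₂, hR₂, h2f₁, h2f₂, h2e₂, h2e₁⟩ := move7 v (reaches_refl B v)
            obtain ⟨v₃, hR₃, h3f₁, -, -, -, -⟩ := move_ad v₂ hR₂ 1
            refine ⟨_, v₃, hR₃, rfl, ?_⟩
            rw [h3f₁, h2f₁, h2e₂, ha, hc, hd]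
            simpa using hb
        · obtain ⟨v₂, hR₂, h2f₁, -, -, -, -⟩ := move_ad v (reaches_refl B v) 1
          refine ⟨_, v₂, hR₂, rfl, ?_⟩
          rw [h2f₁, ha]
          simpa using hd
      · obtain ⟨v₂, hR₂, h2f₁, -, -, -, -⟩ := move_ac v (reaches_refl B v) 1
        refine ⟨_, v₂, hR₂, rfl, ?_⟩
        rw [h2f₁, ha]
        simpa using hc
    · exact ⟨_, v, reaches_refl B v, rfl, ha⟩
  set μ := sInf NS with hμdef
  obtain ⟨v₁, hR1, hμ1, hne1⟩ := Nat.sInf_mem hNS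
  have hμpos : 0 < μ := by rw [hμdef, ← hμ1]; exact Int.natAbs_pos.mpr hne1
  have CONTRA : ∀ v₃ : Γ, Reaches B v v₃ → B v₃ f₁ ≠ 0 → (B v₃ f₁).natAbs < μ → False := by
    intro v₃ h3 hne hlt
    have hle : μ ≤ (B v₃ f₁).natAbs := Nat.sInf_le ⟨v₃, h3, rfl, hne⟩
    omega
  -- Euclid : at a minimal state, a ∣ c
  have euc_c : ∀ v' : Γ, Reaches B v v' → (B v' f₁).natAbs = μ → B v' f₁ ∣ B v' f₂ := by
    intro v' hR hμeq
    by_contra hnd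
    have ha0 : B v' f₁ ≠ 0 := by
      intro h
      rw [h] at hμeq
      simp at hμeq
      omega
    have hApos : (0:ℤ) < (((B v' f₁).natAbs : ℤ)) := by
      exact_mod_cast Int.natAbs_pos.mpr ha0
    set a := B v' f₁ with hadef
    set c := B v' f₂ with hcdef
    set ρ := c % ((a.natAbs : ℤ)) with hρdef
    have hρ0 : 0 ≤ ρ := Int.emod_nonneg c (by omega)
    have hρlt : ρ < (a.natAbs : ℤ) := Int.emod_lt_of_pos c hApos
    have hρne : ρ ≠ 0 := by
      intro h
      apply hnd
      have h1 : ((a.natAbs : ℤ)) ∣ c := Int.dvd_of_emod_eq_zero h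
      exact Int.natAbs_dvd.mp h1
    have hdvd : a ∣ ρ - c := by
      have h1 : ((a.natAbs : ℤ)) ∣ c - ρ := ⟨c / (a.natAbs : ℤ), by rw [hρdef, Int.emod_def]; ring⟩
      have h2 : a ∣ c - ρ := Int.natAbs_dvd.mp h1
      have h3 := h2.neg_right
      rwa [neg_sub] at h3
    obtain ⟨v₂, hR₂, h2f₁, h2f₂, -, -, -⟩ := move_c v' hR ((ρ - c) / a)
    have h2f₂' : B v₂ f₂ = ρ := by
      rw [h2f₂, ← hcdef, ← hadef, Int.mul_ediv_cancel' hdvd]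
      ring
    by_cases hρa : ρ ∣ a
    · obtain ⟨v₃, hR₃, h3f₁, -, -, -, -⟩ := move_ac v₂ hR₂ ((ρ - a) / ρ)
      have h3f₁' : B v₃ f₁ = ρ := by
        rw [h3f₁, h2f₁, h2f₂', ← hadef, Int.mul_ediv_cancel' (dvd_sub dvd_rfl hρa)]
        ring
      refine CONTRA v₃ hR₃ (by rw [h3f₁']; exact hρne) ?_
      rw [h3f₁']
      omega
    · obtain ⟨v₃, hR₃, h3f₁, -, -, -, -⟩ := move_ac v₂ hR₂ (-(a / ρ))
      have h3f₁' : B v₃ f₁ = a % ρ := by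
        rw [h3f₁, h2f₁, h2f₂', ← hadef, Int.emod_def]
        ring
      have hρpos : 0 < ρ := lt_of_le_of_ne hρ0 (Ne.symm hρne)
      have hne3 : a % ρ ≠ 0 := fun h => hρa (Int.dvd_of_emod_eq_zero h)
      have hm1 : 0 ≤ a % ρ := Int.emod_nonneg a hρne
      have hm2 : a % ρ < ρ := Int.emod_lt_of_pos a hρpos
      refine CONTRA v₃ hR₃ (by rw [h3f₁']; exact hne3) ?_
      rw [h3f₁']
      omega
  -- Euclid : at a minimal state, a ∣ d
  have euc_d : ∀ v' : Γ, Reaches B v v' → (B v' f₁).natAbs = μ → B v' f₁ ∣ B v' e₂ := by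
    intro v' hR hμeq
    by_contra hnd
    have ha0 : B v' f₁ ≠ 0 := by
      intro h
      rw [h] at hμeq
      simp at hμeq
      omega
    have hApos : (0:ℤ) < (((B v' f₁).natAbs : ℤ)) := by
      exact_mod_cast Int.natAbs_pos.mpr ha0
    set a := B v' f₁ with hadef
    set d := B v' e₂ with hddef
    set ρ := d % ((a.natAbs : ℤ)) with hρdef
    have hρ0 : 0 ≤ ρ := Int.emod_nonneg d (by omega)
    have hρlt : ρ < (a.natAbs : ℤ) := Int.emod_lt_of_pos d hApos
    have hρne : ρ ≠ 0 := by
      intro h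
      apply hnd
      have h1 : ((a.natAbs : ℤ)) ∣ d := Int.dvd_of_emod_eq_zero h
      exact Int.natAbs_dvd.mp h1
    have hdvd : a ∣ ρ - d := by
      have h1 : ((a.natAbs : ℤ)) ∣ d - ρ := ⟨d / (a.natAbs : ℤ), by rw [hρdef, Int.emod_def]; ring⟩
      have h2 : a ∣ d - ρ := Int.natAbs_dvd.mp h1
      have h3 := h2.neg_right
      rwa [neg_sub] at h3
    obtain ⟨v₂, hR₂, h2f₁, -, h2e₂, -, -⟩ := move_d v' hR ((ρ - d) / a)
    have h2e₂' : B v₂ e₂ = ρ := by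
      rw [h2e₂, ← hddef, ← hadef, Int.mul_ediv_cancel' hdvd]
      ring
    by_cases hρa : ρ ∣ a
    · obtain ⟨v₃, hR₃, h3f₁, -, -, -, -⟩ := move_ad v₂ hR₂ ((ρ - a) / ρ)
      have h3f₁' : B v₃ f₁ = ρ := by
        rw [h3f₁, h2f₁, h2e₂', ← hadef, Int.mul_ediv_cancel' (dvd_sub dvd_rfl hρa)]
        ring
      refine CONTRA v₃ hR₃ (by rw [h3f₁']; exact hρne) ?_
      rw [h3f₁']
      omega
    · obtain ⟨v₃, hR₃, h3f₁, -, -, -, -⟩ := move_ad v₂ hR₂ (-(a / ρ))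
      have h3f₁' : B v₃ f₁ = a % ρ := by
        rw [h3f₁, h2f₁, h2e₂', ← hadef, Int.emod_def]
        ring
      have hρpos : 0 < ρ := lt_of_le_of_ne hρ0 (Ne.symm hρne)
      have hne3 : a % ρ ≠ 0 := fun h => hρa (Int.dvd_of_emod_eq_zero h)
      have hm1 : 0 ≤ a % ρ := Int.emod_nonneg a hρne
      have hm2 : a % ρ < ρ := Int.emod_lt_of_pos a hρpos
      refine CONTRA v₃ hR₃ (by rw [h3f₁']; exact hne3) ?_
      rw [h3f₁']
      omega
  -- main chain
  have hc1 : B v₁ f₁ ∣ B v₁ f₂ := euc_c v₁ hR1 hμ1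
  have hd1 : B v₁ f₁ ∣ B v₁ e₂ := euc_d v₁ hR1 hμ1
  obtain ⟨v₂, hR2, h2f₁, h2f₂, h2e₂, h2e₁, h2l⟩ := move_d v₁ hR1 (-(B v₁ e₂ / B v₁ f₁))
  have h2e₂' : B v₂ e₂ = 0 := by
    rw [h2e₂, mul_neg, Int.mul_ediv_cancel' hd1]
    ring
  obtain ⟨v₃, hR3, h3f₁, h3f₂, h3e₂, h3e₁, h3l⟩ := move_c v₂ hR2 (-(B v₂ f₂ / B v₂ f₁))
  have hc2 : B v₂ f₁ ∣ B v₂ f₂ := by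
    rw [h2f₁, h2f₂]
    exact hc1
  have h3f₂' : B v₃ f₂ = 0 := by
    rw [h3f₂, mul_neg, Int.mul_ediv_cancel' hc2]
    ring
  have h3e₂' : B v₃ e₂ = 0 := by rw [h3e₂, h2e₂']
  have h3f₁' : B v₃ f₁ = B v₁ f₁ := by rw [h3f₁, h2f₁]
  have hμ3 : (B v₃ f₁).natAbs = μ := by rw [h3f₁']; exact hμ1
  have hne3 : B v₃ f₁ ≠ 0 := by rw [h3f₁']; exact hne1
  -- a ∣ b
  have hb3 : B v₃ f₁ ∣ B v₃ e₁ := by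
    by_contra hnd
    obtain ⟨v₄, hR4, h4f₁, h4f₂, h4e₂, h4e₁⟩ := move8 v₃ hR3
    have h4f₁' : B v₄ f₁ = B v₃ f₁ := by rw [h4f₁, h3e₂']; ring
    have h := euc_c v₄ hR4 (by rw [h4f₁']; exact hμ3)
    rw [h4f₁', h4f₂, h3f₂', zero_add] at h
    exact hnd h
  -- a divides all pairings with the orthogonal complement
  have hl3 : ∀ l : Γ, B e₁ l = 0 → B f₁ l = 0 → B e₂ l = 0 → B f₂ l = 0 →
      B v₃ f₁ ∣ B v₃ l := by
    intro l hl1 hl2 hle2 hlf2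
    by_contra hnd
    obtain ⟨v₄, hR4, h4f₁, h4f₂, h4e₂, h4e₁, h4l⟩ := move_c v₃ hR3 1
    have h4f₁' : B v₄ f₁ = B v₃ f₁ := h4f₁
    have h4f₂' : B v₄ f₂ = B v₃ f₁ := by rw [h4f₂, h3f₂']; ring
    have h4e₁' : B v₄ e₁ = B v₃ e₁ := by rw [h4e₁, h3e₂']; ring
    have h4l' : B v₄ l = B v₃ l := h4l l hle2 hl2
    obtain ⟨n, hn⟩ := heven l
    obtain ⟨v₅, hR5, h5f₁, h5f₂, h5e₂, h5e₁⟩ := move10 v₄ hR4 l n hl1 hl2 hle2 hlf2 hn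
    have h5f₁' : B v₅ f₁ = B v₃ f₁ - B v₃ l - n * B v₃ e₁ := by
      rw [h5f₁, h4f₁', h4l', h4e₁']
    have h5f₂' : B v₅ f₂ = B v₃ f₁ := by rw [h5f₂, h4f₂']
    have hnd5 : ¬ B v₃ f₁ ∣ B v₅ f₁ := by
      intro h
      apply hnd
      have h2 : B v₃ l = B v₃ f₁ - B v₅ f₁ - n * B v₃ e₁ := by rw [h5f₁']; ring
      rw [h2]
      exact dvd_sub (dvd_sub dvd_rfl h) (hb3.mul_left n)
    have hne5 : B v₅ f₁ ≠ 0 := by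
      intro h
      exact hnd5 (by rw [h]; exact dvd_zero _)
    have hApos : (0:ℤ) < (((B v₃ f₁).natAbs : ℤ)) := by
      exact_mod_cast Int.natAbs_pos.mpr hne3
    set a₆ := B v₅ f₁ % (((B v₃ f₁).natAbs : ℤ)) with ha₆def
    have ha₆0 : 0 ≤ a₆ := Int.emod_nonneg _ (by omega)
    have ha₆lt : a₆ < ((B v₃ f₁).natAbs : ℤ) := Int.emod_lt_of_pos _ hApos
    have ha₆ne : a₆ ≠ 0 := by
      intro h
      apply hnd5
      have h1 : (((B v₃ f₁).natAbs : ℤ)) ∣ B v₅ f₁ := Int.dvd_of_emod_eq_zero h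
      exact Int.natAbs_dvd.mp h1
    have hdvd6 : B v₃ f₁ ∣ a₆ - B v₅ f₁ := by
      have h1 : (((B v₃ f₁).natAbs : ℤ)) ∣ B v₅ f₁ - a₆ :=
        ⟨B v₅ f₁ / ((B v₃ f₁).natAbs : ℤ), by rw [ha₆def, Int.emod_def]; ring⟩
      have h2 := (Int.natAbs_dvd.mp h1).neg_right
      rwa [neg_sub] at h2
    obtain ⟨v₆, hR6, h6f₁, -, -, -, -⟩ := move_ac v₅ hR5 ((a₆ - B v₅ f₁) / B v₃ f₁)
    have h6f₁' : B v₆ f₁ = a₆ := by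
      rw [h6f₁, h5f₂', Int.mul_ediv_cancel' hdvd6]
      ring
    refine CONTRA v₆ hR6 (by rw [h6f₁']; exact ha₆ne) ?_
    rw [h6f₁']
    omega
  -- hence a divides every pairing of v₃, so a ∣ r
  have hdivall : ∀ z, B v₃ f₁ ∣ B v₃ z := by
    intro z
    obtain ⟨za, zb, zc, zd, uz, hz1, hz2, hz3, hz4, hzeq⟩ := hsplit z
    rw [hzeq]
    simp only [map_add, map_smul, smul_eq_mul]
    rw [h3e₂', h3f₂']
    refine dvd_add (dvd_add (dvd_add (dvd_add ?_ ?_) ?_) ?_) ?_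
    · exact Dvd.dvd.mul_left hb3 za
    · exact Dvd.dvd.mul_left dvd_rfl zb
    · simp
    · simp
    · exact hl3 uz hz1 hz2 hz3 hz4
  obtain ⟨φ₃, hφ₃, hv₃⟩ := hR3
  have har : B v₃ f₁ ∣ r := by
    refine hdv' _ (fun y => ?_)
    rw [← hφ₃.1 v y, hv₃]
    exact hdivall (φ₃ y)
  have hra : r ∣ B v₃ f₁ := by
    have h := hdv (φ₃.symm f₁)
    rw [← hφ₃.1 v (φ₃.symm f₁), hv₃, LinearEquiv.apply_symm_apply] at h
    exact h
  have hsign : B v₃ f₁ = r ∨ B v₃ f₁ = -r := by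
    have h1 := Int.natAbs_dvd_natAbs.mpr har
    have h2 := Int.natAbs_dvd_natAbs.mpr hra
    exact Int.natAbs_eq_natAbs_iff.mp (Nat.dvd_antisymm h1 h2)
  rcases hsign with h | h
  · exact ⟨v₃, ⟨φ₃, hφ₃, hv₃⟩, h, h3f₂', h3e₂'⟩
  · obtain ⟨v₇, hR7, h7f₁, h7f₂, h7e₂⟩ := move11 v₃ ⟨φ₃, hφ₃, hv₃⟩
    refine ⟨v₇, hR7, ?_, ?_, ?_⟩
    · rw [h7f₁, h]; ring
    · rw [h7f₂, h3f₂']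
    · rw [h7e₂, h3e₂']


end EichlerAux

/-- **Eichler criterion.** Let `Γ` be an even nondegenerate lattice containing `U ⊕ U` as an
orthogonal direct summand (encoded by the elements `e₁, f₁, e₂, f₂` with hyperbolic Gram matrices
and the orthogonal splitting hypothesis `hsplit`).  Let `v, w ∈ Γ` be nonzero with `q(v) = q(w)`,
`div(v) = div(w) = r` and such that `v/r` and `w/r` agree in the discriminant group `A_Γ = Γ^∨/Γ`
(equivalently `v - w = r • u` for some `u ∈ Γ`).  Then there is an isometry `φ ∈ O(Γ)` with
`φ v = w` acting as the identity on `A_Γ` (equivalently: for every `x ∈ Γ` and `m ≠ 0` with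
`x/m ∈ Γ^∨`, i.e. `m ∣ (x, z)` for all `z`, one has `m ∣ φ x - x` in `Γ`). -/
theorem eichler_criterion
    {Γ : Type*} [AddCommGroup Γ] [Module ℤ Γ] [Module.Free ℤ Γ] [Module.Finite ℤ Γ]
    (B : Γ →ₗ[ℤ] Γ →ₗ[ℤ] ℤ)
    (hsymm : ∀ x y, B x y = B y x)
    (hnondeg : ∀ x, (∀ y, B x y = 0) → x = 0)
    (heven : ∀ x, 2 ∣ B x x)
    (e₁ f₁ e₂ f₂ : Γ)
    (he₁ : B e₁ e₁ = 0) (hf₁ : B f₁ f₁ = 0) (he₁f₁ : B e₁ f₁ = 1)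
    (he₂ : B e₂ e₂ = 0) (hf₂ : B f₂ f₂ = 0) (he₂f₂ : B e₂ f₂ = 1)
    (h₁₂ : B e₁ e₂ = 0) (h₁₂' : B e₁ f₂ = 0) (h₁₂'' : B f₁ e₂ = 0) (h₁₂''' : B f₁ f₂ = 0)
    (hsplit : ∀ x : Γ, ∃ (a b c d : ℤ) (u : Γ),
      B e₁ u = 0 ∧ B f₁ u = 0 ∧ B e₂ u = 0 ∧ B f₂ u = 0 ∧
      x = a • e₁ + b • f₁ + c • e₂ + d • f₂ + u)
    (v w : Γ) (hv : v ≠ 0) (hw : w ≠ 0)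
    (hq : B v v = B w w)
    (r : ℤ) (hrpos : 0 < r)
    (hdv : ∀ y, r ∣ B v y) (hdv' : ∀ s : ℤ, (∀ y, s ∣ B v y) → s ∣ r)
    (hdw : ∀ y, r ∣ B w y) (hdw' : ∀ s : ℤ, (∀ y, s ∣ B w y) → s ∣ r)
    (hdisc : ∃ u : Γ, v - w = r • u) :
    ∃ φ : Γ ≃ₗ[ℤ] Γ,
      (∀ x y, B (φ x) (φ y) = B x y) ∧
      φ v = w ∧
      (∀ (x : Γ) (m : ℤ), m ≠ 0 → (∀ z, m ∣ B x z) → ∃ u : Γ, φ x - x = m • u) := by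
  have hMod : ‹Module ℤ Γ› = AddCommGroup.toIntModule Γ := by
    letI := AddCommGroup.uniqueIntModule (M := Γ)
    exact Subsingleton.elim _ _
  subst hMod
  obtain ⟨vc, hRv, hvc1, hvc2, hvc3⟩ := reduce_canonical B hsymm hnondeg heven e₁ f₁ e₂ f₂
    he₁ hf₁ he₁f₁ he₂ hf₂ he₂f₂ h₁₂ h₁₂' h₁₂'' h₁₂''' hsplit v hv r hrpos hdv hdv'
  obtain ⟨wc, hRw, hwc1, hwc2, hwc3⟩ := reduce_canonical B hsymm hnondeg heven e₁ f₁ e₂ f₂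
    he₁ hf₁ he₁f₁ he₂ hf₂ he₂f₂ h₁₂ h₁₂' h₁₂'' h₁₂''' hsplit w hw r hrpos hdw hdw'
  obtain ⟨φ, hφ, hφv⟩ := hRv
  obtain ⟨ψ, hψ, hψw⟩ := hRw
  obtain ⟨t₁, ht₁⟩ := hφ.2 v r hdv
  obtain ⟨t₂, ht₂⟩ := hψ.2 w r hdw
  obtain ⟨t₀, ht₀⟩ := hdisc
  set t : Γ := t₁ + t₀ - t₂ with htdef
  have hδ : vc - wc = r • t := by
    rw [← hφv, ← hψw, htdef]
    have h : φ v - ψ w = (φ v - v) + (v - w) - (ψ w - w) := by abel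
    rw [h, ht₁, ht₀, ht₂]
    module
  have hvc_eq : vc = wc + r • t := by rw [← hδ]; abel
  have hrne : r ≠ 0 := ne_of_gt hrpos
  have hBtf₁ : B t f₁ = 0 := by
    have h2 : B (vc - wc) f₁ = 0 := by
      rw [map_sub, LinearMap.sub_apply, hvc1, hwc1, sub_self]
    rw [hδ] at h2
    have h3 : r * B t f₁ = 0 := by
      simpa [map_smul, smul_eq_mul] using h2
    rcases mul_eq_zero.mp h3 with h | h
    · exact absurd h hrne
    · exact h
  have hBf₁t : B f₁ t = 0 := (hsymm f₁ t).trans hBtf₁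
  obtain ⟨n, hn⟩ := heven t
  have hqv : B vc vc = B v v := by rw [← hφv]; exact hφ.1 v v
  have hqw : B wc wc = B w w := by rw [← hψw]; exact hψ.1 w w
  have hexp : B vc vc = B wc wc + r * B wc t + r * B t wc + r * (r * B t t) := by
    conv_lhs => rw [hvc_eq]
    simp only [map_add, map_smul, LinearMap.add_apply, LinearMap.smul_apply, smul_eq_mul]
    ring
  have hBtwc : B t wc + n * r = 0 := by
    have h1 : B wc wc + r * B wc t + r * B t wc + r * (r * B t t) = B wc wc := by
      rw [← hexp, hqv, hq, hqw]
    rw [hsymm wc t, hn] at h1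
    have h3 : (2 * r) * (B t wc + n * r) = 0 := by linear_combination h1
    rcases mul_eq_zero.mp h3 with h | h
    · omega
    · exact h
  obtain ⟨χ, hχ, hχx⟩ := sp_transvection B hsymm f₁ t n hf₁ hBf₁t hn
  have hBf₁wc : B f₁ wc = r := (hsymm f₁ wc).trans hwc1
  have hχwc : χ wc = vc := by
    rw [hχx wc, hBf₁wc, hBtwc, zero_smul, sub_zero, ← hvc_eq]
  have spT := sp_trans hφ (sp_trans (sp_symm hχ) (sp_symm hψ))
  refine ⟨φ.trans (χ.symm.trans ψ.symm), spT.1, ?_, fun x m _ hx => spT.2 x m hx⟩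
  have h1 : χ.symm vc = wc := by rw [← hχwc, LinearEquiv.symm_apply_apply]
  calc (φ.trans (χ.symm.trans ψ.symm)) v = ψ.symm (χ.symm (φ v)) := rfl
    _ = w := by rw [hφv, h1, ← hψw, LinearEquiv.symm_apply_apply]
end

section
/- Let M and N be unimodular lattices, and set L := M ⊕ N(2) and L̂ := M(2) ⊕ N. Then there is a group isomorphism O(L) ≅ O(L̂). More precisely, identifying L(2) = M(2) ⊕ N(4) with the finite-index sublattice M(2) ⊕ 2N of L̂, every isometry of L̂ preserves this sublattice, the resulting restriction map O(L̂) → O(L(2)) = O(L) is a group isomorphism, and it induces a bijection between the rays (half-lines ℚ_{>0}·x spanned by nonzero lattice vectors) of L and of L̂. -/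
open Matrix

section Prelude

variable {ι : Type*} [Fintype ι] [DecidableEq ι]

/-- The bilinear form associated to a Gram matrix `G`. -/
def bf (G : Matrix ι ι ℤ) (x y : ι → ℤ) : ℤ := x ⬝ᵥ G.mulVec y

/-- `φ` is an isometry of the lattice `(ι → ℤ, bf G)`. -/
def IsIsometry (G : Matrix ι ι ℤ) (φ : (ι → ℤ) ≃ₗ[ℤ] (ι → ℤ)) : Prop :=
  ∀ x y, bf G (φ x) (φ y) = bf G x y

/-- `x` is a primitive lattice vector. -/
def IsPrimitive (x : ι → ℤ) : Prop :=
  x ≠ 0 ∧ ∀ (k : ℤ) (y : ι → ℤ), x = k • y → IsUnit k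

/-- `d` is the divisibility of `x`: the positive generator of the ideal `(x, L) ⊆ ℤ`. -/
def HasDiv (G : Matrix ι ι ℤ) (x : ι → ℤ) (d : ℤ) : Prop :=
  0 < d ∧ (∀ y, d ∣ bf G x y) ∧ ∀ s : ℤ, (∀ y, s ∣ bf G x y) → s ∣ d

/-- The Gram matrix of the hyperbolic plane `U`. -/
def gramU : Matrix (Fin 2) (Fin 2) ℤ := !![0, 1; 1, 0]

/-- The Gram matrix of `E₈(-1)`: the negative of the `E₈` Cartan matrix. -/
def gramE8 : Matrix (Fin 8) (Fin 8) ℤ := - CartanMatrix.E₈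

/-- The Gram matrix of `U³`. -/
def gramU3 : Matrix (Fin 2 × Fin 3) (Fin 2 × Fin 3) ℤ :=
  Matrix.blockDiagonal fun _ => gramU

/-- The Gram matrix of `U(2)³`. -/
def gramU2_3 : Matrix (Fin 2 × Fin 3) (Fin 2 × Fin 3) ℤ :=
  Matrix.blockDiagonal fun _ => (2 : ℤ) • gramU

/-- The subgroup of isometries of the lattice with Gram matrix `G`. -/
def isomGroup (G : Matrix ι ι ℤ) : Subgroup ((ι → ℤ) ≃ₗ[ℤ] (ι → ℤ)) where
  carrier := {φ | IsIsometry G φ}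
  one_mem' := fun _ _ => rfl
  mul_mem' := by
    intro a b ha hb x y
    show bf G (a (b x)) (a (b y)) = bf G x y
    rw [ha, hb]
  inv_mem' := by
    intro a ha x y
    have h := ha (a.symm x) (a.symm y)
    simp only [LinearEquiv.apply_symm_apply] at h
    exact h.symm

/-- Two nonzero lattice vectors span the same ray iff positive multiples agree. -/
def raySetoid (ι : Type*) : Setoid {x : ι → ℤ // x ≠ 0} where
  r x y := ∃ a b : ℤ, 0 < a ∧ 0 < b ∧ a • x.1 = b • y.1
  iseqv := by
    constructor
    · exact fun x => ⟨1, 1, one_pos, one_pos, rfl⟩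
    · rintro x y ⟨a, b, ha, hb, h⟩
      exact ⟨b, a, hb, ha, h.symm⟩
    · rintro x y z ⟨a, b, ha, hb, h⟩ ⟨c, d, hc, hd, h'⟩
      refine ⟨c * a, b * d, mul_pos hc ha, mul_pos hb hd, ?_⟩
      calc (c * a) • x.1 = c • a • x.1 := (smul_smul c a x.1).symm
        _ = c • b • y.1 := by rw [h]
        _ = b • c • y.1 := smul_comm c b y.1
        _ = b • d • z.1 := by rw [h']
        _ = (b * d) • z.1 := smul_smul b d z.1

/-- The set of rays (half-lines spanned by nonzero lattice vectors). -/
def Ray (ι : Type*) := Quotient (raySetoid ι)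

/-- The ray spanned by a nonzero lattice vector. -/
def rayMk (x : ι → ℤ) (hx : x ≠ 0) : Ray ι := Quotient.mk (raySetoid ι) ⟨x, hx⟩

/-- The action of a linear automorphism on rays. -/
def rayMap (φ : (ι → ℤ) ≃ₗ[ℤ] (ι → ℤ)) : Ray ι → Ray ι :=
  Quotient.map (fun p => ⟨φ p.1, fun h => p.2 (by simpa using φ.map_eq_zero_iff.mp h)⟩)
    (by
      rintro x y ⟨a, b, ha, hb, h⟩
      refine ⟨a, b, ha, hb, ?_⟩
      show a • φ x.1 = b • φ y.1
      rw [← _root_.map_smul, ← _root_.map_smul, h])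

end Prelude

/-- Doubling the `N`-coordinates: the natural identification of `L(2) = M(2) ⊕ N(4)` with the
sublattice `M(2) ⊕ 2N` of `L̂ = M(2) ⊕ N`. -/
def dbl {α β : Type*} (x : α ⊕ β → ℤ) : α ⊕ β → ℤ :=
  Sum.elim (fun i => x (Sum.inl i)) (fun j => 2 * x (Sum.inr j))
section Helpers
open Matrix

/-- Doubling the `M`-coordinates. -/
def dblM {α β : Type*} (x : α ⊕ β → ℤ) : α ⊕ β → ℤ :=
  Sum.elim (fun i => 2 * x (Sum.inl i)) (fun j => x (Sum.inr j))

/-- Halving the `N`-coordinates. -/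
def halfN {α β : Type*} (x : α ⊕ β → ℤ) : α ⊕ β → ℤ :=
  Sum.elim (fun i => x (Sum.inl i)) (fun j => x (Sum.inr j) / 2)

/-- Halving the `M`-coordinates. -/
def halfM {α β : Type*} (x : α ⊕ β → ℤ) : α ⊕ β → ℤ :=
  Sum.elim (fun i => x (Sum.inl i) / 2) (fun j => x (Sum.inr j))

variable {α β : Type*}

lemma dbl_add (x y : α ⊕ β → ℤ) : dbl (x + y) = dbl x + dbl y := by
  funext p; cases p <;> simp [dbl] <;> ring

lemma dbl_smul (c : ℤ) (x : α ⊕ β → ℤ) : dbl (c • x) = c • dbl x := by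
  funext p; cases p <;> simp [dbl] <;> ring

lemma dblM_add (x y : α ⊕ β → ℤ) : dblM (x + y) = dblM x + dblM y := by
  funext p; cases p <;> simp [dblM] <;> ring

lemma dblM_smul (c : ℤ) (x : α ⊕ β → ℤ) : dblM (c • x) = c • dblM x := by
  funext p; cases p <;> simp [dblM] <;> ring

lemma dbl_even (x : α ⊕ β → ℤ) : ∀ j, 2 ∣ dbl x (Sum.inr j) := fun j => ⟨x (Sum.inr j), rfl⟩

lemma dblM_even (x : α ⊕ β → ℤ) : ∀ i, 2 ∣ dblM x (Sum.inl i) := fun i => ⟨x (Sum.inl i), rfl⟩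

lemma halfN_dbl (x : α ⊕ β → ℤ) : halfN (dbl x) = x := by
  funext p; cases p <;> simp [halfN, dbl] <;> omega

lemma halfM_dblM (x : α ⊕ β → ℤ) : halfM (dblM x) = x := by
  funext p; cases p <;> simp [halfM, dblM] <;> omega

lemma dbl_halfN {x : α ⊕ β → ℤ} (h : ∀ j, 2 ∣ x (Sum.inr j)) : dbl (halfN x) = x := by
  funext p; cases p with
  | inl i => rfl
  | inr j => have := h j; simp only [dbl, halfN, Sum.elim_inr]; omega

lemma dblM_halfM {x : α ⊕ β → ℤ} (h : ∀ i, 2 ∣ x (Sum.inl i)) : dblM (halfM x) = x := by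
  funext p; cases p with
  | inl i => have := h i; simp only [dblM, halfM, Sum.elim_inl]; omega
  | inr j => rfl

lemma halfN_add {x y : α ⊕ β → ℤ} (hx : ∀ j, 2 ∣ x (Sum.inr j))
    (hy : ∀ j, 2 ∣ y (Sum.inr j)) : halfN (x + y) = halfN x + halfN y := by
  funext p; cases p with
  | inl i => rfl
  | inr j => have := hx j; have := hy j; simp only [halfN, Sum.elim_inr, Pi.add_apply]; omega

lemma halfM_add {x y : α ⊕ β → ℤ} (hx : ∀ i, 2 ∣ x (Sum.inl i))
    (hy : ∀ i, 2 ∣ y (Sum.inl i)) : halfM (x + y) = halfM x + halfM y := by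
  funext p; cases p with
  | inl i => have := hx i; have := hy i; simp only [halfM, Sum.elim_inl, Pi.add_apply]; omega
  | inr j => rfl

lemma halfN_smul (c : ℤ) {x : α ⊕ β → ℤ} (hx : ∀ j, 2 ∣ x (Sum.inr j)) :
    halfN (c • x) = c • halfN x := by
  funext p; cases p with
  | inl i => rfl
  | inr j =>
    obtain ⟨a, ha⟩ := hx j
    simp only [halfN, Sum.elim_inr, Pi.smul_apply, smul_eq_mul, ha, mul_left_comm c 2 a,
      Int.mul_ediv_cancel_left _ (by norm_num : (2:ℤ) ≠ 0)]

lemma halfM_smul (c : ℤ) {x : α ⊕ β → ℤ} (hx : ∀ i, 2 ∣ x (Sum.inl i)) :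
    halfM (c • x) = c • halfM x := by
  funext p; cases p with
  | inl i =>
    obtain ⟨a, ha⟩ := hx i
    simp only [halfM, Sum.elim_inl, Pi.smul_apply, smul_eq_mul, ha, mul_left_comm c 2 a,
      Int.mul_ediv_cancel_left _ (by norm_num : (2:ℤ) ≠ 0)]
  | inr j => rfl

lemma dbl_dblM (x : α ⊕ β → ℤ) : dbl (dblM x) = (2:ℤ) • x := by
  funext p; cases p <;> simp [dbl, dblM, Pi.smul_apply, smul_eq_mul] <;> ring

lemma dblM_dbl (x : α ⊕ β → ℤ) : dblM (dbl x) = (2:ℤ) • x := by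
  funext p; cases p <;> simp [dbl, dblM, Pi.smul_apply, smul_eq_mul] <;> ring

lemma halfM_halfN_two (x : α ⊕ β → ℤ) : halfM (halfN ((2:ℤ) • x)) = x := by
  funext p; cases p <;> simp [halfM, halfN, Pi.smul_apply, smul_eq_mul] <;> omega

lemma halfN_halfM_two (x : α ⊕ β → ℤ) : halfN (halfM ((2:ℤ) • x)) = x := by
  funext p; cases p <;> simp [halfM, halfN, Pi.smul_apply, smul_eq_mul] <;> omega

lemma dbl_eq_zero_iff {x : α ⊕ β → ℤ} : dbl x = 0 ↔ x = 0 := by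
  constructor
  · intro h
    funext p
    cases p with
    | inl i => exact congrFun h (Sum.inl i)
    | inr j => have := congrFun h (Sum.inr j); simp [dbl] at this ⊢; omega
  · rintro rfl; funext p; cases p <;> simp [dbl]

variable {m n : ℕ}

lemma sum_eq_elim (x : Fin m ⊕ Fin n → ℤ) :
    x = Sum.elim (fun i => x (Sum.inl i)) (fun j => x (Sum.inr j)) := by
  funext p; cases p <;> rfl

lemma bf_blocks (A : Matrix (Fin m) (Fin m) ℤ) (B : Matrix (Fin n) (Fin n) ℤ)
    (x y : Fin m ⊕ Fin n → ℤ) :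
    bf (Matrix.fromBlocks A 0 0 B) x y =
      (fun i => x (Sum.inl i)) ⬝ᵥ (A *ᵥ fun i => y (Sum.inl i)) +
      (fun j => x (Sum.inr j)) ⬝ᵥ (B *ᵥ fun j => y (Sum.inr j)) := by
  conv_lhs => rw [bf, sum_eq_elim x, sum_eq_elim y]
  rw [Matrix.fromBlocks_mulVec]
  simp

lemma even_of_dvd_pairings {k : ℕ} (C : Matrix (Fin k) (Fin k) ℤ)
    (hC : C.det = 1 ∨ C.det = -1) (v : Fin k → ℤ)
    (h : ∀ w : Fin k → ℤ, 2 ∣ v ⬝ᵥ (C *ᵥ w)) : ∀ j, 2 ∣ v j := by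
  classical
  set Cb : Matrix (Fin k) (Fin k) (ZMod 2) := C.map (Int.cast) with hCb
  have hdet : IsUnit Cb.det := by
    have hd : Cb.det = ((C.det : ℤ) : ZMod 2) :=
      ((RingHom.map_det (Int.castRingHom (ZMod 2)) C)).symm
    rcases hC with h1 | h1 <;> rw [hd, h1] <;> simp <;> exact isUnit_one
  set vb : Fin k → ZMod 2 := fun i => ((v i : ℤ) : ZMod 2) with hvb
  have hv : Matrix.vecMul vb Cb = 0 := by
    funext j
    have h2 : 2 ∣ Matrix.vecMul v C j := by
      have := h (Pi.single j 1)
      rw [Matrix.mulVec_single] at this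
      simpa [Matrix.vecMul, dotProduct] using this
    have : ((Matrix.vecMul v C j : ℤ) : ZMod 2) = 0 := by
      rw [ZMod.intCast_zmod_eq_zero_iff_dvd]
      exact_mod_cast h2
    calc Matrix.vecMul vb Cb j = ((Matrix.vecMul v C j : ℤ) : ZMod 2) := by
          simp only [Matrix.vecMul, dotProduct, hvb, hCb, Matrix.map_apply]
          push_cast
          rfl
      _ = 0 := this
  have hv0 : vb = 0 := by
    have h1 : Matrix.vecMul (Matrix.vecMul vb Cb) Cb⁻¹ = vb := by
      rw [Matrix.vecMul_vecMul, Matrix.mul_nonsing_inv _ hdet, Matrix.vecMul_one]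
    rw [hv, Matrix.zero_vecMul] at h1
    exact h1.symm
  intro j
  have := congrFun hv0 j
  rw [hvb] at this
  simp only [Pi.zero_apply] at this
  have h3 := (ZMod.intCast_zmod_eq_zero_iff_dvd (v j) 2).mp this
  exact_mod_cast h3

lemma dvd_bf_iff_N (A : Matrix (Fin m) (Fin m) ℤ) (B : Matrix (Fin n) (Fin n) ℤ)
    (hB : B.det = 1 ∨ B.det = -1) (x : Fin m ⊕ Fin n → ℤ) :
    (∀ y, 2 ∣ bf (Matrix.fromBlocks ((2:ℤ) • A) 0 0 B) x y) ↔ ∀ j, 2 ∣ x (Sum.inr j) := by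
  constructor
  · intro h
    apply even_of_dvd_pairings B hB
    intro w
    have := h (Sum.elim 0 w)
    rwa [bf_blocks, show (fun i => Sum.elim (0 : Fin m → ℤ) w (Sum.inl i)) = 0 from rfl,
      Matrix.mulVec_zero, dotProduct_zero, zero_add] at this
  · intro h y
    rw [bf_blocks]
    apply dvd_add
    · rw [Matrix.smul_mulVec, dotProduct_smul]
      exact ⟨_, rfl⟩
    · exact Finset.dvd_sum fun j _ => Dvd.dvd.mul_right (h j) _

lemma dvd_bf_iff_M (A : Matrix (Fin m) (Fin m) ℤ) (B : Matrix (Fin n) (Fin n) ℤ)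
    (hA : A.det = 1 ∨ A.det = -1) (x : Fin m ⊕ Fin n → ℤ) :
    (∀ y, 2 ∣ bf (Matrix.fromBlocks A 0 0 ((2:ℤ) • B)) x y) ↔ ∀ i, 2 ∣ x (Sum.inl i) := by
  constructor
  · intro h
    apply even_of_dvd_pairings A hA
    intro w
    have := h (Sum.elim w 0)
    rwa [bf_blocks, show (fun j => Sum.elim w (0 : Fin n → ℤ) (Sum.inr j)) = 0 from rfl,
      Matrix.mulVec_zero, dotProduct_zero, add_zero] at this
  · intro h y
    rw [bf_blocks]
    apply dvd_add
    · exact Finset.dvd_sum fun i _ => Dvd.dvd.mul_right (h i) _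
    · rw [Matrix.smul_mulVec, dotProduct_smul]
      exact ⟨_, rfl⟩

end Helpers
section Construction
open Matrix

lemma isIsometry_symm {ι : Type*} [Fintype ι] [DecidableEq ι] {G : Matrix ι ι ℤ}
    {φ : (ι → ℤ) ≃ₗ[ℤ] (ι → ℤ)} (h : IsIsometry G φ) : IsIsometry G φ.symm := by
  intro x y
  have := h (φ.symm x) (φ.symm y)
  rw [LinearEquiv.apply_symm_apply, LinearEquiv.apply_symm_apply] at this
  exact this.symm

variable {m n : ℕ} (A : Matrix (Fin m) (Fin m) ℤ) (B : Matrix (Fin n) (Fin n) ℤ)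

lemma presN (hB : B.det = 1 ∨ B.det = -1)
    {φ : (Fin m ⊕ Fin n → ℤ) ≃ₗ[ℤ] (Fin m ⊕ Fin n → ℤ)}
    (hφ : IsIsometry (Matrix.fromBlocks ((2:ℤ) • A) 0 0 B) φ) :
    ∀ x, (∀ j, 2 ∣ x (Sum.inr j)) → ∀ j, 2 ∣ φ x (Sum.inr j) := by
  intro x hx
  apply (dvd_bf_iff_N A B hB _).mp
  intro y
  have h := hφ x (φ.symm y)
  rw [LinearEquiv.apply_symm_apply] at h
  rw [h]
  exact (dvd_bf_iff_N A B hB x).mpr hx _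

lemma presM (hA : A.det = 1 ∨ A.det = -1)
    {φ : (Fin m ⊕ Fin n → ℤ) ≃ₗ[ℤ] (Fin m ⊕ Fin n → ℤ)}
    (hφ : IsIsometry (Matrix.fromBlocks A 0 0 ((2:ℤ) • B)) φ) :
    ∀ x, (∀ i, 2 ∣ x (Sum.inl i)) → ∀ i, 2 ∣ φ x (Sum.inl i) := by
  intro x hx
  apply (dvd_bf_iff_M A B hA _).mp
  intro y
  have h := hφ x (φ.symm y)
  rw [LinearEquiv.apply_symm_apply] at h
  rw [h]
  exact (dvd_bf_iff_M A B hA x).mpr hx _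

/-- Restriction of an isometry of `L̂` to the sublattice `M(2) ⊕ 2N ≅ L(2)`. -/
def restrN {α β : Type*} (φ : (α ⊕ β → ℤ) ≃ₗ[ℤ] (α ⊕ β → ℤ))
    (hφ : ∀ x, (∀ j, 2 ∣ x (Sum.inr j)) → ∀ j, 2 ∣ φ x (Sum.inr j))
    (hφ' : ∀ x, (∀ j, 2 ∣ x (Sum.inr j)) → ∀ j, 2 ∣ φ.symm x (Sum.inr j)) :
    (α ⊕ β → ℤ) ≃ₗ[ℤ] (α ⊕ β → ℤ) where
  toFun x := halfN (φ (dbl x))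
  invFun x := halfN (φ.symm (dbl x))
  map_add' x y := by
    show halfN (φ (dbl (x + y))) = halfN (φ (dbl x)) + halfN (φ (dbl y))
    rw [dbl_add, map_add, halfN_add (hφ _ (dbl_even x)) (hφ _ (dbl_even y))]
  map_smul' c x := by
    show halfN (φ (dbl (c • x))) = c • halfN (φ (dbl x))
    rw [dbl_smul, _root_.map_smul, halfN_smul c (hφ _ (dbl_even x))]
  left_inv x := by
    show halfN (φ.symm (dbl (halfN (φ (dbl x))))) = x
    rw [dbl_halfN (hφ _ (dbl_even x)), LinearEquiv.symm_apply_apply, halfN_dbl]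
  right_inv x := by
    show halfN (φ (dbl (halfN (φ.symm (dbl x))))) = x
    rw [dbl_halfN (hφ' _ (dbl_even x)), LinearEquiv.apply_symm_apply, halfN_dbl]

/-- The analogous restriction in the other direction. -/
def restrM {α β : Type*} (φ : (α ⊕ β → ℤ) ≃ₗ[ℤ] (α ⊕ β → ℤ))
    (hφ : ∀ x, (∀ i, 2 ∣ x (Sum.inl i)) → ∀ i, 2 ∣ φ x (Sum.inl i))
    (hφ' : ∀ x, (∀ i, 2 ∣ x (Sum.inl i)) → ∀ i, 2 ∣ φ.symm x (Sum.inl i)) :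
    (α ⊕ β → ℤ) ≃ₗ[ℤ] (α ⊕ β → ℤ) where
  toFun x := halfM (φ (dblM x))
  invFun x := halfM (φ.symm (dblM x))
  map_add' x y := by
    show halfM (φ (dblM (x + y))) = halfM (φ (dblM x)) + halfM (φ (dblM y))
    rw [dblM_add, map_add, halfM_add (hφ _ (dblM_even x)) (hφ _ (dblM_even y))]
  map_smul' c x := by
    show halfM (φ (dblM (c • x))) = c • halfM (φ (dblM x))
    rw [dblM_smul, _root_.map_smul, halfM_smul c (hφ _ (dblM_even x))]
  left_inv x := by
    show halfM (φ.symm (dblM (halfM (φ (dblM x))))) = x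
    rw [dblM_halfM (hφ _ (dblM_even x)), LinearEquiv.symm_apply_apply, halfM_dblM]
  right_inv x := by
    show halfM (φ (dblM (halfM (φ.symm (dblM x))))) = x
    rw [dblM_halfM (hφ' _ (dblM_even x)), LinearEquiv.apply_symm_apply, halfM_dblM]

lemma bf_dbl (x y : Fin m ⊕ Fin n → ℤ) :
    bf (Matrix.fromBlocks ((2:ℤ) • A) 0 0 B) (dbl x) (dbl y) =
      2 * bf (Matrix.fromBlocks A 0 0 ((2:ℤ) • B)) x y := by
  rw [bf_blocks, bf_blocks]
  have e1 : ∀ z : Fin m ⊕ Fin n → ℤ,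
      (fun i => dbl z (Sum.inl i)) = fun i => z (Sum.inl i) := fun _ => rfl
  have e2 : ∀ z : Fin m ⊕ Fin n → ℤ,
      (fun j => dbl z (Sum.inr j)) = (2:ℤ) • fun j => z (Sum.inr j) := by
    intro z; funext j; simp [dbl]
  rw [e1 x, e1 y, e2 x, e2 y]
  simp only [Matrix.smul_mulVec, Matrix.mulVec_smul, smul_dotProduct, dotProduct_smul,
    smul_eq_mul]
  ring

lemma bf_dblM (x y : Fin m ⊕ Fin n → ℤ) :
    bf (Matrix.fromBlocks A 0 0 ((2:ℤ) • B)) (dblM x) (dblM y) =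
      2 * bf (Matrix.fromBlocks ((2:ℤ) • A) 0 0 B) x y := by
  rw [bf_blocks, bf_blocks]
  have e1 : ∀ z : Fin m ⊕ Fin n → ℤ,
      (fun i => dblM z (Sum.inl i)) = (2:ℤ) • fun i => z (Sum.inl i) := by
    intro z; funext i; simp [dblM]
  have e2 : ∀ z : Fin m ⊕ Fin n → ℤ,
      (fun j => dblM z (Sum.inr j)) = fun j => z (Sum.inr j) := fun _ => rfl
  rw [e1 x, e1 y, e2 x, e2 y]
  simp only [Matrix.smul_mulVec, Matrix.mulVec_smul, smul_dotProduct, dotProduct_smul,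
    smul_eq_mul]
  ring

lemma restrN_isom {φ : (Fin m ⊕ Fin n → ℤ) ≃ₗ[ℤ] (Fin m ⊕ Fin n → ℤ)}
    (hφ : IsIsometry (Matrix.fromBlocks ((2:ℤ) • A) 0 0 B) φ)
    (h1 : ∀ x, (∀ j, 2 ∣ x (Sum.inr j)) → ∀ j, 2 ∣ φ x (Sum.inr j))
    (h2 : ∀ x, (∀ j, 2 ∣ x (Sum.inr j)) → ∀ j, 2 ∣ φ.symm x (Sum.inr j)) :
    IsIsometry (Matrix.fromBlocks A 0 0 ((2:ℤ) • B)) (restrN φ h1 h2) := by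
  intro x y
  apply mul_left_cancel₀ (two_ne_zero (α := ℤ))
  rw [← bf_dbl A B, ← bf_dbl A B]
  show bf _ (dbl (halfN (φ (dbl x)))) (dbl (halfN (φ (dbl y)))) = _
  rw [dbl_halfN (h1 _ (dbl_even x)), dbl_halfN (h1 _ (dbl_even y))]
  exact hφ (dbl x) (dbl y)

lemma restrM_isom {φ : (Fin m ⊕ Fin n → ℤ) ≃ₗ[ℤ] (Fin m ⊕ Fin n → ℤ)}
    (hφ : IsIsometry (Matrix.fromBlocks A 0 0 ((2:ℤ) • B)) φ)
    (h1 : ∀ x, (∀ i, 2 ∣ x (Sum.inl i)) → ∀ i, 2 ∣ φ x (Sum.inl i))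
    (h2 : ∀ x, (∀ i, 2 ∣ x (Sum.inl i)) → ∀ i, 2 ∣ φ.symm x (Sum.inl i)) :
    IsIsometry (Matrix.fromBlocks ((2:ℤ) • A) 0 0 B) (restrM φ h1 h2) := by
  intro x y
  apply mul_left_cancel₀ (two_ne_zero (α := ℤ))
  rw [← bf_dblM A B, ← bf_dblM A B]
  show bf _ (dblM (halfM (φ (dblM x)))) (dblM (halfM (φ (dblM y)))) = _
  rw [dblM_halfM (h1 _ (dblM_even x)), dblM_halfM (h1 _ (dblM_even y))]
  exact hφ (dblM x) (dblM y)

lemma dblM_eq_zero_iff {α β : Type*} {x : α ⊕ β → ℤ} : dblM x = 0 ↔ x = 0 := by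
  constructor
  · intro h
    funext p
    cases p with
    | inl i => have := congrFun h (Sum.inl i); simp [dblM] at this ⊢; omega
    | inr j => exact congrFun h (Sum.inr j)
  · rintro rfl; funext p; cases p <;> simp [dblM]

end Construction

/-- Let `M` and `N` be unimodular lattices (with symmetric nondegenerate Gram matrices `A`, `B`),
and set `L := M ⊕ N(2)` and `L̂ := M(2) ⊕ N`.  Then: every isometry of `L̂` preserves the
sublattice `M(2) ⊕ 2N` (the image of the doubling identification `dbl : L(2) ≅ M(2) ⊕ 2N ⊆ L̂`);
the resulting restriction map is a group isomorphism `O(L̂) ≃ O(L(2)) = O(L)`; and `dbl` induces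
a bijection between the rays of `L` and the rays of `L̂`. -/
theorem isometry_groups_of_twisted_lattices {m n : ℕ}
    (A : Matrix (Fin m) (Fin m) ℤ) (B : Matrix (Fin n) (Fin n) ℤ)
    (hAsymm : A.IsSymm) (hBsymm : B.IsSymm)
    (hAuni : A.det = 1 ∨ A.det = -1) (hBuni : B.det = 1 ∨ B.det = -1) :
    (∀ φ : (Fin m ⊕ Fin n → ℤ) ≃ₗ[ℤ] (Fin m ⊕ Fin n → ℤ),
        IsIsometry (Matrix.fromBlocks ((2 : ℤ) • A) 0 0 B) φ →
        ∀ x : Fin m ⊕ Fin n → ℤ, (∀ j, 2 ∣ x (Sum.inr j)) → ∀ j, 2 ∣ φ x (Sum.inr j)) ∧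
    (∃ F : isomGroup (Matrix.fromBlocks ((2 : ℤ) • A) 0 0 B) ≃*
        isomGroup (Matrix.fromBlocks A 0 0 ((2 : ℤ) • B)),
      ∀ (φ : isomGroup (Matrix.fromBlocks ((2 : ℤ) • A) 0 0 B)) (x : Fin m ⊕ Fin n → ℤ),
        dbl ((F φ).1 x) = φ.1 (dbl x)) ∧
    (∃ ρ : Ray (Fin m ⊕ Fin n) ≃ Ray (Fin m ⊕ Fin n),
      ∀ (x : Fin m ⊕ Fin n → ℤ) (hx : x ≠ 0) (hdx : dbl x ≠ 0),
        ρ (rayMk x hx) = rayMk (dbl x) hdx) := by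
  refine ⟨fun φ hφ => presN A B hBuni hφ, ?_, ?_⟩
  · refine ⟨⟨⟨fun φ => ⟨restrN φ.1 (presN A B hBuni φ.2) (presN A B hBuni (isIsometry_symm φ.2)),
        restrN_isom A B φ.2 _ _⟩,
      fun ψ => ⟨restrM ψ.1 (presM A B hAuni ψ.2) (presM A B hAuni (isIsometry_symm ψ.2)),
        restrM_isom A B ψ.2 _ _⟩, ?_, ?_⟩, ?_⟩, ?_⟩
    · intro φ
      refine Subtype.ext (LinearEquiv.ext fun y => ?_)
      show halfM (halfN (φ.1 (dbl (dblM y)))) = φ.1 y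
      rw [dbl_dblM, _root_.map_smul, halfM_halfN_two]
    · intro ψ
      refine Subtype.ext (LinearEquiv.ext fun x => ?_)
      show halfN (halfM (ψ.1 (dblM (dbl x)))) = ψ.1 x
      rw [dblM_dbl, _root_.map_smul, halfN_halfM_two]
    · intro φ ψ
      refine Subtype.ext (LinearEquiv.ext fun x => ?_)
      show halfN ((φ * ψ).1 (dbl x)) = halfN (φ.1 (dbl (halfN (ψ.1 (dbl x)))))
      rw [dbl_halfN (presN A B hBuni ψ.2 _ (dbl_even x))]
      rfl
    · intro φ x
      show dbl (halfN (φ.1 (dbl x))) = φ.1 (dbl x)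
      exact dbl_halfN (presN A B hBuni φ.2 _ (dbl_even x))
  · refine ⟨⟨Quotient.map (fun p => ⟨dbl p.1, fun h => p.2 (dbl_eq_zero_iff.mp h)⟩) ?_,
      Quotient.map (fun p => ⟨dblM p.1, fun h => p.2 (dblM_eq_zero_iff.mp h)⟩) ?_, ?_, ?_⟩, ?_⟩
    · rintro x y ⟨a, b, ha, hb, h⟩
      refine ⟨a, b, ha, hb, ?_⟩
      show a • dbl x.1 = b • dbl y.1
      rw [← dbl_smul, ← dbl_smul, h]
    · rintro x y ⟨a, b, ha, hb, h⟩
      refine ⟨a, b, ha, hb, ?_⟩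
      show a • dblM x.1 = b • dblM y.1
      rw [← dblM_smul, ← dblM_smul, h]
    · intro r
      refine Quotient.inductionOn r fun p => ?_
      exact Quotient.sound ⟨1, 2, one_pos, two_pos, by rw [one_smul]; exact dblM_dbl p.1⟩
    · intro r
      refine Quotient.inductionOn r fun p => ?_
      exact Quotient.sound ⟨1, 2, one_pos, two_pos, by rw [one_smul]; exact dbl_dblM p.1⟩
    · intro x hx hdx
      rfl
end

section
/- There is a group isomorphism between the isometry groups O(U(2)³ ⊕ E8(−1) ⊕ (−2) ⊕ (−2)) and O(U³ ⊕ E8(−2) ⊕ (−1) ⊕ (−1)), together with a compatible (equivariant) bijection between the rays (half-lines ℚ_{>0}·x spanned by nonzero lattice vectors) of the two lattices. -/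
open Matrix

/-- The common index type of the rank 16 lattices `Λ` and `Λ̂`. -/
abbrev I16 := (Fin 2 × Fin 3) ⊕ (Fin 8 ⊕ (Fin 1 ⊕ Fin 1))

/-- The Gram matrix of `Λ = U(2)³ ⊕ E₈(-1) ⊕ (-2) ⊕ (-2)`, the Beauville–Bogomolov lattice of
Nikulin orbifolds. -/
def gramLambda : Matrix I16 I16 ℤ :=
  Matrix.fromBlocks gramU2_3 0 0
    (Matrix.fromBlocks gramE8 0 0 (Matrix.fromBlocks !![-2] 0 0 !![-2]))

/-- The Gram matrix of `Λ̂ = U³ ⊕ E₈(-2) ⊕ (-1) ⊕ (-1)`. -/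
def gramLambdaHat : Matrix I16 I16 ℤ :=
  Matrix.fromBlocks gramU3 0 0
    (Matrix.fromBlocks ((2 : ℤ) • gramE8) 0 0 (Matrix.fromBlocks !![-1] 0 0 !![-1]))


section Aux

variable {ι : Type*} [Fintype ι] [DecidableEq ι]

/-- matrix of a linear equivalence -/
private def emat (φ : (ι → ℤ) ≃ₗ[ℤ] (ι → ℤ)) : Matrix ι ι ℤ :=
  LinearMap.toMatrix' φ.toLinearMap

lemma emat_apply (φ : (ι → ℤ) ≃ₗ[ℤ] (ι → ℤ)) (x : ι → ℤ) :
    φ x = (emat φ).mulVec x := by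
  conv_lhs => rw [show φ x = φ.toLinearMap x from rfl, ← Matrix.toLin'_toMatrix' φ.toLinearMap]
  rw [Matrix.toLin'_apply]; rfl

lemma emat_mul_symm (φ : (ι → ℤ) ≃ₗ[ℤ] (ι → ℤ)) :
    emat φ * emat φ.symm = 1 := by
  have h : φ.toLinearMap ∘ₗ φ.symm.toLinearMap = LinearMap.id := by ext x; simp
  rw [emat, emat, ← LinearMap.toMatrix'_comp, h, LinearMap.toMatrix'_id]

lemma emat_symm_mul (φ : (ι → ℤ) ≃ₗ[ℤ] (ι → ℤ)) :
    emat φ.symm * emat φ = 1 := by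
  have h : φ.symm.toLinearMap ∘ₗ φ.toLinearMap = LinearMap.id := by ext x; simp
  rw [emat, emat, ← LinearMap.toMatrix'_comp, h, LinearMap.toMatrix'_id]

lemma emat_mul (φ ψ : (ι → ℤ) ≃ₗ[ℤ] (ι → ℤ)) :
    emat (φ * ψ) = emat φ * emat ψ := by
  have h : (φ * ψ).toLinearMap = φ.toLinearMap ∘ₗ ψ.toLinearMap := rfl
  rw [emat, h, LinearMap.toMatrix'_comp]; rfl

private lemma bf_mulVec (A P : Matrix ι ι ℤ) (x y : ι → ℤ) :
    (P.mulVec x) ⬝ᵥ A.mulVec (P.mulVec y) = x ⬝ᵥ (Pᵀ * A * P).mulVec y := by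
  rw [← Matrix.vecMul_transpose, ← Matrix.dotProduct_mulVec, Matrix.mulVec_mulVec,
    Matrix.mulVec_mulVec, Matrix.mul_assoc]

private lemma matrix_ext_of_dot {A B : Matrix ι ι ℤ}
    (h : ∀ x y, x ⬝ᵥ A.mulVec y = x ⬝ᵥ B.mulVec y) : A = B := by
  ext i j
  have := h (Pi.single i 1) (Pi.single j 1)
  simpa [Matrix.mulVec_single_one, single_dotProduct] using this

lemma isIsometry_iff_matrix (G : Matrix ι ι ℤ) (φ : (ι → ℤ) ≃ₗ[ℤ] (ι → ℤ)) :
    IsIsometry G φ ↔ (emat φ)ᵀ * G * (emat φ) = G := by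
  constructor
  · intro h
    refine matrix_ext_of_dot fun x y => ?_
    have := h x y
    rwa [bf, bf, emat_apply, emat_apply, bf_mulVec] at this
  · intro h x y
    rw [bf, bf, emat_apply, emat_apply, bf_mulVec, h]

end Aux
set_option linter.unusedSectionVars false

section Conj
open Matrix
variable {ι : Type*} [Fintype ι] [DecidableEq ι]

lemma conj_isometry_matrix (G H N M P Q : Matrix ι ι ℤ)
    (hNM : N * M = 1)
    (hKG : (Nᵀ * H * N) * G = (2:ℤ) • 1)
    (hGK : G * (Nᵀ * H * N) = (2:ℤ) • 1)
    (hPQ : P * Q = 1) (hQP : Q * P = 1)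
    (hP : Pᵀ * G * P = G) :
    (N * Qᵀ * M)ᵀ * H * (N * Qᵀ * M) = H := by
  set K := Nᵀ * H * N with hK
  have hGQ : G * Q = Pᵀ * G := by
    calc G * Q = (Pᵀ * G * P) * Q := by rw [hP]
    _ = Pᵀ * G * (P * Q) := by rw [mul_assoc]
    _ = Pᵀ * G := by rw [hPQ, mul_one]
  have h1 : G * (K * Pᵀ) = (2:ℤ) • Pᵀ := by
    rw [← mul_assoc, hGK, smul_mul_assoc, one_mul]
  have h2 : G * (Q * K) = (2:ℤ) • Pᵀ := by
    rw [← mul_assoc, hGQ, mul_assoc, hGK, mul_smul_comm, mul_one]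
  have hcancel : K * Pᵀ = Q * K := by
    have h3 : (2:ℤ) • (K * Pᵀ) = (2:ℤ) • (Q * K) := by
      calc (2:ℤ) • (K * Pᵀ) = ((2:ℤ) • (1:Matrix ι ι ℤ)) * (K * Pᵀ) := by
            rw [smul_mul_assoc, one_mul]
      _ = K * (G * (K * Pᵀ)) := by rw [← hKG, mul_assoc]
      _ = K * (G * (Q * K)) := by rw [h1, h2]
      _ = ((2:ℤ) • (1:Matrix ι ι ℤ)) * (Q * K) := by rw [← mul_assoc, hKG]
      _ = (2:ℤ) • (Q * K) := by rw [smul_mul_assoc, one_mul]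
    exact smul_right_injective _ (two_ne_zero) h3
  have hQKQ : Q * K * Qᵀ = K := by
    calc Q * K * Qᵀ = K * Pᵀ * Qᵀ := by rw [← hcancel]
    _ = K * (Q * P)ᵀ := by rw [mul_assoc, ← Matrix.transpose_mul]
    _ = K := by rw [hQP, Matrix.transpose_one, mul_one]
  calc (N * Qᵀ * M)ᵀ * H * (N * Qᵀ * M)
      = Mᵀ * (Q * K * Qᵀ) * M := by
        simp only [Matrix.transpose_mul, Matrix.transpose_transpose, hK]
        noncomm_ring
    _ = Mᵀ * (Nᵀ * H * N) * M := by rw [hQKQ]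
    _ = (N * M)ᵀ * H * (N * M) := by
        simp only [Matrix.transpose_mul]; noncomm_ring
    _ = H := by rw [hNM, Matrix.transpose_one, one_mul, mul_one]

end Conj
section Hom
open Matrix
variable {ι : Type*} [Fintype ι] [DecidableEq ι]

/-- The linear equivalence with matrix `A` (with explicit inverse `B`). -/
def matEquiv (A B : Matrix ι ι ℤ) (hAB : A * B = 1) (hBA : B * A = 1) :
    (ι → ℤ) ≃ₗ[ℤ] (ι → ℤ) :=
  LinearEquiv.ofLinear A.mulVecLin B.mulVecLin
    (by rw [← Matrix.mulVecLin_mul, hAB, Matrix.mulVecLin_one])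
    (by rw [← Matrix.mulVecLin_mul, hBA, Matrix.mulVecLin_one])

@[simp] lemma matEquiv_apply (A B : Matrix ι ι ℤ) (hAB : A * B = 1) (hBA : B * A = 1)
    (x : ι → ℤ) : matEquiv A B hAB hBA x = A.mulVec x := rfl

lemma emat_matEquiv (A B : Matrix ι ι ℤ) (hAB : A * B = 1) (hBA : B * A = 1) :
    emat (matEquiv A B hAB hBA) = A := by
  rw [emat, show (matEquiv A B hAB hBA).toLinearMap = A.mulVecLin from rfl,
    ← Matrix.toLin'_apply', LinearMap.toMatrix'_toLin']

lemma emat_matEquiv_symm (A B : Matrix ι ι ℤ) (hAB : A * B = 1) (hBA : B * A = 1) :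
    emat (matEquiv A B hAB hBA).symm = B := by
  rw [emat, show (matEquiv A B hAB hBA).symm.toLinearMap = B.mulVecLin from rfl,
    ← Matrix.toLin'_apply', LinearMap.toMatrix'_toLin']

variable (N M : Matrix ι ι ℤ)

lemma conj_mul_conj (hMN : M * N = 1) (hNM : N * M = 1)
    (φ ψ : (ι → ℤ) ≃ₗ[ℤ] (ι → ℤ)) :
    (N * (emat φ)ᵀ * M) * (N * (emat ψ)ᵀ * M) = N * (emat ψ * emat φ)ᵀ * M := by
  calc (N * (emat φ)ᵀ * M) * (N * (emat ψ)ᵀ * M)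
      = N * ((emat φ)ᵀ * ((M * N) * (emat ψ)ᵀ)) * M := by simp only [mul_assoc]
    _ = N * (emat ψ * emat φ)ᵀ * M := by
        rw [hMN, one_mul, ← Matrix.transpose_mul]

lemma conj_mul_conj_symm (hMN : M * N = 1) (hNM : N * M = 1)
    (φ : (ι → ℤ) ≃ₗ[ℤ] (ι → ℤ)) :
    (N * (emat φ.symm)ᵀ * M) * (N * (emat φ)ᵀ * M) = 1 := by
  rw [conj_mul_conj N M hMN hNM, emat_mul_symm, Matrix.transpose_one, mul_one, hNM]

lemma conj_mul_conj_symm' (hMN : M * N = 1) (hNM : N * M = 1)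
    (φ : (ι → ℤ) ≃ₗ[ℤ] (ι → ℤ)) :
    (N * (emat φ)ᵀ * M) * (N * (emat φ.symm)ᵀ * M) = 1 := by
  rw [conj_mul_conj N M hMN hNM, emat_symm_mul, Matrix.transpose_one, mul_one, hNM]

variable (G H : Matrix ι ι ℤ)

/-- Conjugation homomorphism between the isometry groups. -/
def conjHom (hNM : N * M = 1) (hMN : M * N = 1)
    (hKG : (Nᵀ * H * N) * G = (2:ℤ) • 1)
    (hGK : G * (Nᵀ * H * N) = (2:ℤ) • 1) :
    isomGroup G →* isomGroup H where
  toFun φ := ⟨matEquiv (N * (emat φ.1.symm)ᵀ * M) (N * (emat φ.1)ᵀ * M)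
      (conj_mul_conj_symm N M hMN hNM φ.1) (conj_mul_conj_symm' N M hMN hNM φ.1),
    by
      show IsIsometry H _
      rw [isIsometry_iff_matrix, emat_matEquiv]
      exact conj_isometry_matrix G H N M (emat φ.1) (emat φ.1.symm) hNM hKG hGK
        (emat_mul_symm φ.1) (emat_symm_mul φ.1)
        ((isIsometry_iff_matrix G φ.1).mp φ.2)⟩
  map_one' := by
    refine Subtype.ext (LinearEquiv.ext fun x => ?_)
    show (N * (emat ((1 : isomGroup G)).1.symm)ᵀ * M).mulVec x = x
    have h1 : emat ((1 : isomGroup G).1.symm) = (1 : Matrix ι ι ℤ) := by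
      rw [show ((1 : isomGroup G)).1.symm = LinearEquiv.refl ℤ (ι → ℤ) from rfl,
        emat, show (LinearEquiv.refl ℤ (ι → ℤ)).toLinearMap = LinearMap.id from rfl,
        LinearMap.toMatrix'_id]
    rw [h1, Matrix.transpose_one, mul_one, hNM, Matrix.one_mulVec]
  map_mul' φ ψ := by
    refine Subtype.ext (LinearEquiv.ext fun x => ?_)
    show (N * (emat ((φ * ψ)).1.symm)ᵀ * M).mulVec x
      = (N * (emat φ.1.symm)ᵀ * M).mulVec ((N * (emat ψ.1.symm)ᵀ * M).mulVec x)
    simp only [Matrix.mulVec_mulVec]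
    congr 1
    have hsymm : (φ * ψ).1.symm = ψ.1.symm * φ.1.symm := rfl
    rw [hsymm, emat_mul, conj_mul_conj N M hMN hNM]

lemma conjHom_emat (hNM : N * M = 1) (hMN : M * N = 1)
    (hKG : (Nᵀ * H * N) * G = (2:ℤ) • 1) (hGK : G * (Nᵀ * H * N) = (2:ℤ) • 1)
    (φ : isomGroup G) :
    emat ((conjHom N M G H hNM hMN hKG hGK φ).1) = N * (emat φ.1.symm)ᵀ * M :=
  emat_matEquiv _ _ (conj_mul_conj_symm N M hMN hNM φ.1) (conj_mul_conj_symm' N M hMN hNM φ.1)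

lemma conjHom_emat_symm (hNM : N * M = 1) (hMN : M * N = 1)
    (hKG : (Nᵀ * H * N) * G = (2:ℤ) • 1) (hGK : G * (Nᵀ * H * N) = (2:ℤ) • 1)
    (φ : isomGroup G) :
    emat ((conjHom N M G H hNM hMN hKG hGK φ).1.symm) = N * (emat φ.1)ᵀ * M :=
  emat_matEquiv_symm _ _ (conj_mul_conj_symm N M hMN hNM φ.1) (conj_mul_conj_symm' N M hMN hNM φ.1)

end Hom
section Equiv
open Matrix
variable {ι : Type*} [Fintype ι] [DecidableEq ι]

lemma conj_cancel (N1 M1 N2 M2 G1 H1 : Matrix ι ι ℤ)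
    (hNM1 : N1 * M1 = 1) (hMN1 : M1 * N1 = 1)
    (hKG1 : (N1ᵀ * H1 * N1) * G1 = (2:ℤ) • 1) (hGK1 : G1 * (N1ᵀ * H1 * N1) = (2:ℤ) • 1)
    (hNM2 : N2 * M2 = 1) (hMN2 : M2 * N2 = 1)
    (hKG2 : (N2ᵀ * G1 * N2) * H1 = (2:ℤ) • 1) (hGK2 : H1 * (N2ᵀ * G1 * N2) = (2:ℤ) • 1)
    (hA : N2 * M1ᵀ = 1) (hB : N1ᵀ * M2 = 1)
    (φ : isomGroup G1) :
    conjHom N2 M2 H1 G1 hNM2 hMN2 hKG2 hGK2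
      (conjHom N1 M1 G1 H1 hNM1 hMN1 hKG1 hGK1 φ) = φ := by
  have hmat : N2 * (N1 * (emat φ.1)ᵀ * M1)ᵀ * M2 = emat φ.1 := by
    calc N2 * (N1 * (emat φ.1)ᵀ * M1)ᵀ * M2
        = N2 * (M1ᵀ * (emat φ.1 * (N1ᵀ * M2))) := by
          simp only [Matrix.transpose_mul, Matrix.transpose_transpose, mul_assoc]
      _ = (N2 * M1ᵀ) * emat φ.1 := by rw [hB, mul_one, mul_assoc]
      _ = emat φ.1 := by rw [hA, one_mul]
  refine Subtype.ext (LinearEquiv.ext fun x => ?_)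
  rw [emat_apply ((conjHom N2 M2 H1 G1 hNM2 hMN2 hKG2 hGK2
      (conjHom N1 M1 G1 H1 hNM1 hMN1 hKG1 hGK1 φ)).1),
    conjHom_emat, conjHom_emat_symm, hmat, ← emat_apply]

/-- The conjugation isomorphism between the isometry groups. -/
def conjMulEquiv (N M G H : Matrix ι ι ℤ)
    (hNM : N * M = 1) (hMN : M * N = 1)
    (hKG : (Nᵀ * H * N) * G = (2:ℤ) • 1) (hGK : G * (Nᵀ * H * N) = (2:ℤ) • 1)
    (hKG' : (N * G * Nᵀ) * H = (2:ℤ) • 1) (hGK' : H * (N * G * Nᵀ) = (2:ℤ) • 1) :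
    isomGroup G ≃* isomGroup H where
  toFun := conjHom N M G H hNM hMN hKG hGK
  invFun := conjHom Nᵀ Mᵀ H G
    (by rw [← Matrix.transpose_mul, hMN, Matrix.transpose_one])
    (by rw [← Matrix.transpose_mul, hNM, Matrix.transpose_one])
    (by rw [Matrix.transpose_transpose]; exact hKG')
    (by rw [Matrix.transpose_transpose]; exact hGK')
  left_inv φ := by
    apply conj_cancel
    · rw [← Matrix.transpose_mul, hMN, Matrix.transpose_one]
    · rw [← Matrix.transpose_mul, hMN, Matrix.transpose_one]
  right_inv ψ := by
    apply conj_cancel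
    · rw [Matrix.transpose_transpose, hNM]
    · rw [Matrix.transpose_transpose, hNM]
  map_mul' := (conjHom N M G H hNM hMN hKG hGK).map_mul'

end Equiv
section Rays
open Matrix
variable {ι : Type*} [Fintype ι] [DecidableEq ι]

lemma mulVec_ne_zero (T T' : Matrix ι ι ℤ) (hT'T : T' * T = (2:ℤ) • 1)
    {x : ι → ℤ} (hx : x ≠ 0) : T.mulVec x ≠ 0 := by
  intro h
  apply hx
  have h2 : T'.mulVec (T.mulVec x) = (2:ℤ) • x := by
    rw [Matrix.mulVec_mulVec, hT'T, Matrix.smul_mulVec, Matrix.one_mulVec]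
  rw [h, Matrix.mulVec_zero] at h2
  have := h2.symm
  exact smul_right_injective _ (two_ne_zero) (by simpa using this)

/-- The map induced on rays by `mulVec T`. -/
def rayHalf (T T' : Matrix ι ι ℤ) (hT'T : T' * T = (2:ℤ) • 1) : Ray ι → Ray ι :=
  Quotient.map (fun p => ⟨T.mulVec p.1, mulVec_ne_zero T T' hT'T p.2⟩)
    (by
      rintro ⟨x, hx⟩ ⟨y, hy⟩ ⟨a, b, ha, hb, h⟩
      exact ⟨a, b, ha, hb, by
        show a • T.mulVec x = b • T.mulVec y
        rw [← Matrix.mulVec_smul, ← Matrix.mulVec_smul, h]⟩)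

lemma rayHalf_mk (T T' : Matrix ι ι ℤ) (hT'T : T' * T = (2:ℤ) • 1)
    (x : ι → ℤ) (hx : x ≠ 0) :
    rayHalf T T' hT'T (rayMk x hx) = rayMk (T.mulVec x) (mulVec_ne_zero T T' hT'T hx) := rfl

lemma rayHalf_half (T T' : Matrix ι ι ℤ)
    (hTT' : T * T' = (2:ℤ) • 1) (hT'T : T' * T = (2:ℤ) • 1) (q : Ray ι) :
    rayHalf T' T hTT' (rayHalf T T' hT'T q) = q := by
  induction q using Quotient.ind with
  | _ p =>
    obtain ⟨x, hx⟩ := p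
    show rayHalf T' T hTT' (rayHalf T T' hT'T (rayMk x hx)) = rayMk x hx
    rw [rayHalf_mk, rayHalf_mk]
    apply Quotient.sound
    refine ⟨1, 2, one_pos, two_pos, ?_⟩
    show (1:ℤ) • T'.mulVec (T.mulVec x) = (2:ℤ) • x
    rw [one_smul, Matrix.mulVec_mulVec, hT'T, Matrix.smul_mulVec, Matrix.one_mulVec]

/-- The ray equivalence induced by a pair of mutually "halved-inverse" matrices. -/
def rayEquiv (T T' : Matrix ι ι ℤ)
    (hTT' : T * T' = (2:ℤ) • 1) (hT'T : T' * T = (2:ℤ) • 1) : Ray ι ≃ Ray ι where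
  toFun := rayHalf T T' hT'T
  invFun := rayHalf T' T hTT'
  left_inv := rayHalf_half T T' hTT' hT'T
  right_inv := rayHalf_half T' T hT'T hTT'

end Rays
section Final
open Matrix
variable {ι : Type*} [Fintype ι] [DecidableEq ι]

lemma rayMap_mk (φ : (ι → ℤ) ≃ₗ[ℤ] (ι → ℤ)) (x : ι → ℤ) (hx : x ≠ 0) (h' : φ x ≠ 0) :
    rayMap φ (rayMk x hx) = rayMk (φ x) h' := rfl

lemma rayMk_congr {x y : ι → ℤ} (hx : x ≠ 0) (hy : y ≠ 0) (h : x = y) :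
    rayMk x hx = rayMk y hy := by subst h; rfl

lemma equivariance_matrix (G N M P Q : Matrix ι ι ℤ) (hMN : M * N = 1)
    (hPQ : P * Q = 1) (hP : Pᵀ * G * P = G) :
    (N * G) * P = (N * Qᵀ * M) * (N * G) := by
  have hGP : G * P = Qᵀ * G := by
    calc G * P = ((P * Q)ᵀ * G) * P := by rw [hPQ, Matrix.transpose_one, one_mul]
    _ = Qᵀ * (Pᵀ * G * P) := by simp only [Matrix.transpose_mul, mul_assoc]
    _ = Qᵀ * G := by rw [hP]
  calc (N * G) * P = N * (Qᵀ * G) := by rw [mul_assoc, hGP]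
  _ = N * Qᵀ * ((M * N) * G) := by rw [hMN, one_mul, mul_assoc]
  _ = (N * Qᵀ * M) * (N * G) := by simp only [mul_assoc]

end Final

/-- Inverse of the `E₈(-1)` Gram matrix. -/
def gE8inv : Matrix (Fin 8) (Fin 8) ℤ :=
  !![-4, -5, -7, -10, -8, -6, -4, -2;
    -5, -8, -10, -15, -12, -9, -6, -3;
    -7, -10, -14, -20, -16, -12, -8, -4;
    -10, -15, -20, -30, -24, -18, -12, -6;
    -8, -12, -16, -24, -20, -15, -10, -5;
    -6, -9, -12, -18, -15, -12, -8, -4;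
    -4, -6, -8, -12, -10, -8, -6, -3;
    -2, -3, -4, -6, -5, -4, -3, -2]

/-- The base-change matrix `N`. -/
def Nmat : Matrix I16 I16 ℤ :=
  Matrix.fromBlocks 1 0 0 (Matrix.fromBlocks gE8inv 0 0 1)

/-- The inverse of `N`. -/
def Mmat : Matrix I16 I16 ℤ :=
  Matrix.fromBlocks 1 0 0 (Matrix.fromBlocks gramE8 0 0 1)

private lemma fact1 : Nmat * Mmat = 1 := by decide
private lemma fact2 : Mmat * Nmat = 1 := by decide
private lemma fact3 : (Nmatᵀ * gramLambdaHat * Nmat) * gramLambda = (2:ℤ) • 1 := by decide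
private lemma fact4 : gramLambda * (Nmatᵀ * gramLambdaHat * Nmat) = (2:ℤ) • 1 := by decide
private lemma fact5 : (Nmat * gramLambda * Nmatᵀ) * gramLambdaHat = (2:ℤ) • 1 := by decide
private lemma fact6 : gramLambdaHat * (Nmat * gramLambda * Nmatᵀ) = (2:ℤ) • 1 := by decide

private lemma factTT' : (Nmat * gramLambda) * (Nmatᵀ * gramLambdaHat) = (2:ℤ) • 1 := by
  rw [← mul_assoc]; exact fact5

private lemma factT'T : (Nmatᵀ * gramLambdaHat) * (Nmat * gramLambda) = (2:ℤ) • 1 := by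
  rw [← mul_assoc]; exact fact3

/-- There is a group isomorphism `O(U(2)³ ⊕ E₈(-1) ⊕ (-2)²) ≅ O(U³ ⊕ E₈(-2) ⊕ (-1)²)` together
with a compatible (equivariant) bijection between the rays of the two lattices. -/
theorem isometry_groups_Nikulin_lattices :
    ∃ (F : isomGroup gramLambda ≃* isomGroup gramLambdaHat) (ρ : Ray I16 ≃ Ray I16),
      ∀ (φ : isomGroup gramLambda) (x : I16 → ℤ) (hx : x ≠ 0) (hφx : φ.1 x ≠ 0),
        ρ (rayMk (φ.1 x) hφx) = rayMap (F φ).1 (ρ (rayMk x hx)) := by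
  refine ⟨conjMulEquiv Nmat Mmat gramLambda gramLambdaHat fact1 fact2 fact3 fact4 fact5 fact6,
    rayEquiv (Nmat * gramLambda) (Nmatᵀ * gramLambdaHat) factTT' factT'T, ?_⟩
  intro φ x hx hφx
  set F := conjMulEquiv Nmat Mmat gramLambda gramLambdaHat fact1 fact2 fact3 fact4 fact5 fact6
    with hF
  set T := Nmat * gramLambda with hT
  show rayHalf T (Nmatᵀ * gramLambdaHat) factT'T (rayMk (φ.1 x) hφx)
    = rayMap (F φ).1 (rayHalf T (Nmatᵀ * gramLambdaHat) factT'T (rayMk x hx))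
  rw [rayHalf_mk, rayHalf_mk,
    rayMap_mk (F φ).1 (T.mulVec x) (mulVec_ne_zero T _ factT'T hx)
      (fun h => (mulVec_ne_zero T _ factT'T hx) ((F φ).1.map_eq_zero_iff.mp h))]
  apply rayMk_congr
  have h1 : (F φ).1 = (conjHom Nmat Mmat gramLambda gramLambdaHat fact1 fact2 fact3 fact4 φ).1 :=
    rfl
  rw [emat_apply φ.1, Matrix.mulVec_mulVec, h1,
    emat_apply (conjHom Nmat Mmat gramLambda gramLambdaHat fact1 fact2 fact3 fact4 φ).1,
    conjHom_emat, Matrix.mulVec_mulVec]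
  refine congrArg (fun A => Matrix.mulVec A x) ?_
  rw [hT]
  exact equivariance_matrix gramLambda Nmat Mmat (emat φ.1) (emat φ.1.symm) fact2
    (emat_mul_symm φ.1) ((isIsometry_iff_matrix gramLambda φ.1).mp φ.2)
end

section
/- Let Λ̂₃ := U³ ⊕ (−2) with δ̂ a generator of the (−2)-summand. Then the O(Λ̂₃)-orbit of a primitive element of Λ̂₃ is uniquely determined by its square and its divisibility. More precisely, for every primitive v ∈ Λ̂₃: if div(v) = 1, then q(v) is even and there exists an isometry φ ∈ O(Λ̂₃) with φ(v) = L_{q(v)/2}; and if div(v) = 2, then q(v) ≡ −2 (mod 8) and there exists an isometry φ ∈ O(Λ̂₃) with φ(v) = 2L_i − δ̂, where i = (q(v)+2)/8. -/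
/-!
Everything is done with Eichler transvections `E(e, a)` (`e` isotropic, `a ⊥ e`). Those mixing two
copies of `U` act on the four coordinates there as elementary row and column operations on a
`2 × 2` integer matrix, so the Euclidean algorithm moves any `v` into `⟨e, f⟩ᗮ`, where `e, f` is
the standard basis of the first copy. For such `v` with `(v, y) = d`, a transvection along `f`
turns `v` into `v + d f`, and one along `e` then turns this into `n e + d f + (v - d z)` for any
`z ⊥ e, f`. If `d = 1`, take `z = v` to reach `L_n`. If `d = 2`, primitivity forces
`v = 2 z - δ̂`, which reaches `n e + 2 f - δ̂ = 2 L_{n/2} - δ̂`; here `n` is even because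
`q(2 z - δ̂) ≡ -2 (mod 8)`. Finally `div(v) ∈ {1, 2}` for primitive `v`: the ideal `(v, Λ̂₃)`
contains the `U³`-coordinates of `v` and twice its `δ̂`-coordinate.
-/

open Matrix

/-- The index type of `Λ̂₃ = U³ ⊕ (-2)`. -/
abbrev I7 := (Fin 2 × Fin 3) ⊕ Fin 1

/-- The Gram matrix of `Λ̂₃ = U³ ⊕ (-2)`. -/
def gram3 : Matrix I7 I7 ℤ := Matrix.fromBlocks gramU3 0 0 !![-2]

/-- The element `L_i = i·e + f` in the first copy of `U` (so `q(L_i) = 2i`). -/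
def Lv (i : ℤ) : Fin 2 × Fin 3 → ℤ :=
  fun p => if p = ((0 : Fin 2), (0 : Fin 3)) then i
    else if p = ((1 : Fin 2), (0 : Fin 3)) then 1 else 0

/-- `L_i` viewed inside `Λ̂₃`. -/
def Lv3 (i : ℤ) : I7 → ℤ := Sum.elim (Lv i) 0

/-- The generator `δ̂` of the `(-2)`-summand of `Λ̂₃`. -/
def delta3 : I7 → ℤ := Sum.elim 0 1

section Primitive

variable {ι : Type*} {v : ι → ℤ}

lemma IsPrimitive.map (hv : IsPrimitive v) (φ : (ι → ℤ) ≃ₗ[ℤ] (ι → ℤ)) :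
    IsPrimitive (φ v) := by
  refine ⟨by simpa using hv.1, fun k y hk => hv.2 k (φ.symm y) ?_⟩
  rw [← map_smul φ.symm, ← hk, φ.symm_apply_apply]

lemma IsPrimitive.isUnit_of_forall_dvd (hv : IsPrimitive v) {s : ℤ} (hs : ∀ i, s ∣ v i) :
    IsUnit s :=
  hv.2 s (fun i => v i / s) (funext fun i => (Int.mul_ediv_cancel' (hs i)).symm)

end Primitive

/-- Read `(a, b, c, d)` as the matrix `!![a, c; -d, b]`: the four moves are the elementary row and
column operations, and the proof is the Euclidean algorithm computing a Smith normal form. -/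
lemma smith_induction {P : ℤ → ℤ → ℤ → ℤ → Prop}
    (hA : ∀ a b c d k, P (a + k * d) b (c - k * b) d → P a b c d)
    (hB : ∀ a b c d k, P a (b - k * c) c (d + k * a) → P a b c d)
    (hC : ∀ a b c d k, P a (b + k * d) (c - k * a) d → P a b c d)
    (hD : ∀ a b c d k, P (a + k * c) b c (d - k * b) → P a b c d)
    (hdiag : ∀ a b, P a b 0 0) (a b c d : ℤ) : P a b c d := by
  have swap_rows (a b c d) (h : P d c (-b) (-a)) : P a b c d := by
    refine hA a b c d 1 (hB _ _ _ _ (-1) (hA _ _ _ _ 1 ?_))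
    convert h using 1 <;> ring
  have swap_cols (a b c d) (h : P c d (-a) (-b)) : P a b c d := by
    refine hC a b c d 1 (hD _ _ _ _ 1 (hC _ _ _ _ 1 ?_))
    convert h using 1 <;> ring
  have rem_lt {a x r : ℤ} (ha : a ≠ 0) (hx : ¬a ∣ x) (hr : r = x % a) :
      r ≠ 0 ∧ r.natAbs < a.natAbs := by
    subst hr
    refine ⟨fun h => hx (Int.dvd_of_emod_eq_zero h), ?_⟩
    have hlt := Int.emod_lt_abs x ha
    have hnn := Int.emod_nonneg x ha
    rw [Int.abs_eq_natAbs] at hlt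
    omega
  have of_ne_zero (n : ℕ) : ∀ a b c d, a ≠ 0 → a.natAbs = n → P a b c d := by
    induction n using Nat.strong_induction_on with
    | _ n ih =>
    intro a b c d ha hn
    subst hn
    by_cases hd : a ∣ d
    · by_cases hc : a ∣ c
      · obtain ⟨s, rfl⟩ := hd
        obtain ⟨t, rfl⟩ := hc
        refine hB _ _ _ _ (-s) (hC _ _ _ _ t ?_)
        convert hdiag a (b - -s * (a * t) + t * (a * s + -s * a)) using 1 <;> ring
      · obtain ⟨hr, hlt⟩ := rem_lt (r := c - c / a * a) ha hc (by rw [Int.emod_def]; ring)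
        exact hC a b c d (c / a) (swap_cols _ _ _ _ (ih _ hlt _ _ _ _ hr rfl))
    · obtain ⟨hr, hlt⟩ := rem_lt (r := d + -(d / a) * a) ha hd (by rw [Int.emod_def]; ring)
      exact hB a b c d (-(d / a)) (swap_rows _ _ _ _ (ih _ hlt _ _ _ _ hr rfl))
  by_cases ha : a = 0
  · subst ha
    by_cases hd : d = 0
    · by_cases hc : c = 0
      · subst hc hd
        exact hdiag 0 b
      · exact hD 0 b c d 1 (of_ne_zero _ _ _ _ _ (by simpa using hc) rfl)
    · exact hA 0 b c d 1 (of_ne_zero _ _ _ _ _ (by simpa using hd) rfl)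
  · exact of_ne_zero _ a b c d ha rfl

section Lattice

variable {ι : Type*} [Fintype ι] {G : Matrix ι ι ℤ}

@[simp] lemma bf_add_left (x x' y : ι → ℤ) : bf G (x + x') y = bf G x y + bf G x' y :=
  add_dotProduct x x' _

@[simp] lemma bf_sub_left (x x' y : ι → ℤ) : bf G (x - x') y = bf G x y - bf G x' y :=
  sub_dotProduct x x' _

@[simp] lemma bf_smul_left (k : ℤ) (x y : ι → ℤ) : bf G (k • x) y = k * bf G x y :=
  smul_dotProduct k x _

@[simp] lemma bf_add_right (x y y' : ι → ℤ) : bf G x (y + y') = bf G x y + bf G x y' := by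
  rw [bf, mulVec_add, dotProduct_add]; rfl

@[simp] lemma bf_sub_right (x y y' : ι → ℤ) : bf G x (y - y') = bf G x y - bf G x y' := by
  rw [bf, mulVec_sub, dotProduct_sub]; rfl

@[simp] lemma bf_smul_right (k : ℤ) (x y : ι → ℤ) : bf G x (k • y) = k * bf G x y := by
  rw [bf, mulVec_smul, dotProduct_smul, smul_eq_mul]; rfl

@[simp] lemma bf_neg_left (x y : ι → ℤ) : bf G (-x) y = -bf G x y :=
  neg_dotProduct x _

@[simp] lemma bf_neg_right (x y : ι → ℤ) : bf G x (-y) = -bf G x y := by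
  rw [bf, mulVec_neg, dotProduct_neg]; rfl

lemma bf_comm (hG : G.IsSymm) (x y : ι → ℤ) : bf G x y = bf G y x := by
  rw [bf, bf, dotProduct_mulVec, ← mulVec_transpose, hG.eq, dotProduct_comm]

def OEquiv (G : Matrix ι ι ℤ) (v w : ι → ℤ) : Prop :=
  ∃ φ ∈ isomGroup G, φ v = w

namespace OEquiv

variable {u v w : ι → ℤ}

lemma refl (v : ι → ℤ) : OEquiv G v v := ⟨1, (isomGroup G).one_mem, rfl⟩

lemma symm : OEquiv G v w → OEquiv G w v := by
  rintro ⟨φ, hφ, rfl⟩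
  exact ⟨φ⁻¹, (isomGroup G).inv_mem hφ, by simp [LinearEquiv.coe_inv]⟩

lemma trans : OEquiv G u v → OEquiv G v w → OEquiv G u w := by
  rintro ⟨φ, hφ, rfl⟩ ⟨ψ, hψ, rfl⟩
  exact ⟨ψ * φ, (isomGroup G).mul_mem hψ hφ, rfl⟩

lemma bf_self_eq : OEquiv G v w → bf G w w = bf G v v := by
  rintro ⟨φ, hφ, rfl⟩
  exact hφ v v

lemma isPrimitive : OEquiv G v w → IsPrimitive v → IsPrimitive w := by
  rintro ⟨φ, -, rfl⟩ hv
  exact hv.map φ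

lemma hasDiv {d : ℤ} : OEquiv G v w → HasDiv G v d → HasDiv G w d := by
  rintro ⟨φ, hφ, rfl⟩ ⟨hd, hdvd, hmax⟩
  refine ⟨hd, fun y => ?_, fun s hs => hmax s fun y => ?_⟩
  · have h := hφ v (φ.symm y)
    rw [φ.apply_symm_apply] at h
    exact h ▸ hdvd _
  · simpa [hφ v y] using hs (φ y)

end OEquiv

variable (G) in
def bilin : (ι → ℤ) →ₗ[ℤ] (ι → ℤ) →ₗ[ℤ] ℤ :=
  LinearMap.mk₂ ℤ (bf G) bf_add_left bf_smul_left bf_add_right bf_smul_right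

@[simp] lemma bilin_apply (x y : ι → ℤ) : bilin G x y = bf G x y := rfl

lemma exists_bf_eq_and_forall_dvd_bf (x : ι → ℤ) :
    ∃ g, (∃ y, bf G x y = g) ∧ ∀ y, g ∣ bf G x y := by
  set I := LinearMap.range (bilin G x)
  refine ⟨Submodule.IsPrincipal.generator I, Submodule.IsPrincipal.generator_mem I, fun y => ?_⟩
  obtain ⟨s, hs⟩ := (Submodule.IsPrincipal.mem_iff_eq_smul_generator I).1
    (LinearMap.mem_range_self (bilin G x) y)
  exact ⟨s, by rw [← bilin_apply, hs, smul_eq_mul, mul_comm]⟩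

lemma HasDiv.exists_bf_eq {x : ι → ℤ} {d : ℤ} (hd : HasDiv G x d) : ∃ y, bf G x y = d := by
  obtain ⟨g, ⟨y, rfl⟩, hg⟩ := exists_bf_eq_and_forall_dvd_bf (G := G) x
  rcases Int.natAbs_eq_natAbs_iff.1 (Int.natAbs_eq_of_dvd_dvd (hd.2.1 y) (hd.2.2 _ hg))
    with h | h
  · exact ⟨y, h.symm⟩
  · exact ⟨-y, by rw [bf_neg_right, h]⟩

lemma exists_hasDiv (hG : G.Nondegenerate) {x : ι → ℤ} (hx : x ≠ 0) : ∃ d, HasDiv G x d := by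
  obtain ⟨g, ⟨y, rfl⟩, hg⟩ := exists_bf_eq_and_forall_dvd_bf (G := G) x
  refine ⟨|bf G x y|, abs_pos.2 fun h0 => hx (hG.eq_zero_of_ortho fun z => ?_),
    fun z => (abs_dvd _ _).2 (hg z), fun s hs => (dvd_abs _ _).2 (hs y)⟩
  exact zero_dvd_iff.1 (h0 ▸ hg z)

variable (G) in
def eichler (e a : ι → ℤ) (m : ℤ) : (ι → ℤ) →ₗ[ℤ] (ι → ℤ) :=
  LinearMap.id + ((bilin G).flip e).smulRight a -
    ((bilin G).flip a + m • (bilin G).flip e).smulRight e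

lemma eichler_apply (e a : ι → ℤ) (m : ℤ) (x : ι → ℤ) :
    eichler G e a m x = x + bf G x e • a - (bf G x a + m * bf G x e) • e := rfl

section Eichler

variable (hG : G.IsSymm) {e a : ι → ℤ} {m : ℤ} (he : bf G e e = 0) (hae : bf G a e = 0)
  (ha : bf G a a = 2 * m)
include hG he hae ha

lemma eichler_neg_eichler (x : ι → ℤ) : eichler G e (-a) m (eichler G e a m x) = x := by
  have hea : bf G e a = 0 := by rw [bf_comm hG, hae]
  simp only [eichler_apply, bf_add_left, bf_sub_left, bf_smul_left, bf_neg_right, he, hea, hae, ha]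
  module

lemma oequiv_eichler (v : ι → ℤ) : OEquiv G v (eichler G e a m v) := by
  have hinv (x : ι → ℤ) : eichler G e a m (eichler G e (-a) m x) = x := by
    simpa using eichler_neg_eichler hG he (a := -a) (by simp [hae]) (by simp [ha]) x
  refine ⟨.ofLinearMap _ (eichler G e (-a) m) (LinearMap.ext hinv)
    (LinearMap.ext (eichler_neg_eichler hG he hae ha)), fun x y => ?_, rfl⟩
  have hea : bf G e a = 0 := by rw [bf_comm hG, hae]
  simp only [LinearEquiv.coe_ofLinearMap, eichler_apply, bf_add_left, bf_sub_left, bf_smul_left,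
    bf_add_right, bf_sub_right, bf_smul_right, he, hea, hae, ha, bf_comm hG a y, bf_comm hG e y]
  ring

end Eichler

lemma oequiv_add_smul_sub_smul (hG : G.IsSymm) {x y : ι → ℤ} (hx : bf G x x = 0)
    (hy : bf G y y = 0) (hxy : bf G y x = 0) (k : ℤ) (v : ι → ℤ) :
    OEquiv G v (v + (k * bf G v x) • y - (k * bf G v y) • x) := by
  convert oequiv_eichler hG hx (a := k • y) (m := 0) (by rw [bf_smul_left, hxy, mul_zero])
    (by rw [bf_smul_left, bf_smul_right, hy, mul_zero, mul_zero, mul_zero]) v using 1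
  simp only [eichler_apply, bf_smul_right, zero_mul, add_zero]
  module

variable (G) in
def IsHyperbolicPair (e f : ι → ℤ) : Prop :=
  bf G e e = 0 ∧ bf G f f = 0 ∧ bf G e f = 1

lemma exists_oequiv_perp_hyperbolicPair (hG : G.IsSymm) {e f e' f' : ι → ℤ}
    (h : IsHyperbolicPair G e f) (h' : IsHyperbolicPair G e' f') (hee' : bf G e e' = 0)
    (hef' : bf G e f' = 0) (hfe' : bf G f e' = 0) (hff' : bf G f f' = 0) (v : ι → ℤ) :
    ∃ w, OEquiv G v w ∧ bf G w e' = 0 ∧ bf G w f' = 0 := by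
  obtain ⟨he, hf, hef⟩ := h
  obtain ⟨he', hf', he'f'⟩ := h'
  have hfe := (bf_comm hG e f).symm.trans hef
  have hf'e' := (bf_comm hG e' f').symm.trans he'f'
  have he'e := (bf_comm hG e e').symm.trans hee'
  have hf'e := (bf_comm hG e f').symm.trans hef'
  have he'f := (bf_comm hG f e').symm.trans hfe'
  have hf'f := (bf_comm hG f f').symm.trans hff'
  refine smith_induction
    (P := fun a b c d => ∀ v, bf G v f = a → bf G v e = b → bf G v f' = c → bf G v e' = d →
      ∃ w, OEquiv G v w ∧ bf G w e' = 0 ∧ bf G w f' = 0)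
    ?_ ?_ ?_ ?_ (fun a b v _ _ hc hd => ⟨v, .refl v, hd, hc⟩) _ _ _ _ v rfl rfl rfl rfl
  all_goals intro a b c d k hP v ha hb hc hd
  · refine (hP _ ?_ ?_ ?_ ?_).imp fun w hw =>
      ⟨(oequiv_add_smul_sub_smul hG he' he hee' k v).trans hw.1, hw.2⟩ <;>
    simp only [bf_add_left, bf_sub_left, bf_smul_left, *] <;> ring
  · refine (hP _ ?_ ?_ ?_ ?_).imp fun w hw =>
      ⟨(oequiv_add_smul_sub_smul hG hf hf' hf'f k v).trans hw.1, hw.2⟩ <;>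
    simp only [bf_add_left, bf_sub_left, bf_smul_left, *] <;> ring
  · refine (hP _ ?_ ?_ ?_ ?_).imp fun w hw =>
      ⟨(oequiv_add_smul_sub_smul hG he' hf hfe' k v).trans hw.1, hw.2⟩ <;>
    simp only [bf_add_left, bf_sub_left, bf_smul_left, *] <;> ring
  · refine (hP _ ?_ ?_ ?_ ?_).imp fun w hw =>
      ⟨(oequiv_add_smul_sub_smul hG hf' he hef' k v).trans hw.1, hw.2⟩ <;>
    simp only [bf_add_left, bf_sub_left, bf_smul_left, *] <;> ring

lemma exists_oequiv_smul_add_smul_add_sub (hG : G.IsSymm) (heven : ∀ x, Even (bf G x x))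
    {e f v y z : ι → ℤ} {d : ℤ} (hef : IsHyperbolicPair G e f) (hve : bf G v e = 0)
    (hvf : bf G v f = 0) (hy : bf G v y = d) (hze : bf G z e = 0) (hzf : bf G z f = 0) :
    ∃ n : ℤ, OEquiv G v (n • e + d • f + (v - d • z)) := by
  obtain ⟨he, hf, hef⟩ := hef
  have hfe : bf G f e = 1 := by rw [bf_comm hG, hef]
  -- the projection of `-y` to `⟨e, f⟩ᗮ`
  set a := bf G y e • f + bf G y f • e - y
  have haf : bf G a f = 0 := by
    simp only [a, bf_add_left, bf_sub_left, bf_smul_left, hf, hef, bf_comm hG y f]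
    ring
  obtain ⟨m₁, hm₁⟩ := (heven a).two_dvd
  obtain ⟨m₂, hm₂⟩ := (heven (-z)).two_dvd
  have step₁ : eichler G f a m₁ v = v + d • f := by
    simp only [eichler_apply, a, bf_add_right, bf_sub_right, bf_smul_right, hvf, hve, hy]
    module
  have step₂ : eichler G e (-z) m₂ (v + d • f) =
      (bf G v z - m₂ * d) • e + d • f + (v - d • z) := by
    simp only [eichler_apply, bf_add_left, bf_smul_left, bf_neg_right, hve, hfe, hzf,
      bf_comm hG f z]
    module
  refine ⟨bf G v z - m₂ * d, step₂ ▸ step₁ ▸ ?_⟩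
  exact (oequiv_eichler hG hf haf hm₁ v).trans
    (oequiv_eichler hG he (by simp [hze]) (by simpa using hm₂) _)

end Lattice

section Lambda3

def basisE (j : Fin 3) : I7 → ℤ := Pi.single (.inl (0, j)) 1

def basisF (j : Fin 3) : I7 → ℤ := Pi.single (.inl (1, j)) 1

lemma bf_gram3 (x y : I7 → ℤ) : bf gram3 x y =
    ∑ j : Fin 3, (x (.inl (0, j)) * y (.inl (1, j)) + x (.inl (1, j)) * y (.inl (0, j)))
      - 2 * x (.inr 0) * y (.inr 0) := by
  simp [bf, gram3, gramU3, gramU, Matrix.mulVec, dotProduct, Fintype.sum_sum_type,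
    Fintype.sum_prod_type, Fin.sum_univ_succ, Matrix.fromBlocks, Matrix.blockDiagonal]
  ring

@[simp] lemma bf_basisE (x : I7 → ℤ) (j : Fin 3) : bf gram3 x (basisE j) = x (.inl (1, j)) := by
  simp [bf_gram3, basisE, Pi.single_apply]

@[simp] lemma bf_basisF (x : I7 → ℤ) (j : Fin 3) : bf gram3 x (basisF j) = x (.inl (0, j)) := by
  simp [bf_gram3, basisF, Pi.single_apply]

@[simp] lemma bf_delta3 (x : I7 → ℤ) : bf gram3 x delta3 = -2 * x (.inr 0) := by
  simp [bf_gram3, delta3]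

lemma gram3_isSymm : gram3.IsSymm := by
  refine Matrix.IsSymm.fromBlocks ?_ (by simp) (.ext fun i j => Subsingleton.elim i j ▸ rfl)
  rw [Matrix.IsSymm, gramU3, Matrix.blockDiagonal_transpose]
  congr! 2
  exact Matrix.ext fun i j => by fin_cases i <;> fin_cases j <;> rfl

lemma gram3_nondegenerate : gram3.Nondegenerate :=
  Matrix.nondegenerate_of_det_ne_zero (by
    simp [gram3, gramU3, gramU, Matrix.det_fromBlocks_zero₂₁, Matrix.det_blockDiagonal])

lemma even_bf_gram3_self (x : I7 → ℤ) : Even (bf gram3 x x) :=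
  ⟨∑ j : Fin 3, x (.inl (0, j)) * x (.inl (1, j)) - x (.inr 0) * x (.inr 0), by
    rw [bf_gram3, Fin.sum_univ_three, Fin.sum_univ_three]; ring⟩

lemma isHyperbolicPair_basis (j : Fin 3) : IsHyperbolicPair gram3 (basisE j) (basisF j) := by
  simp only [IsHyperbolicPair, bf_basisE, bf_basisF]
  simp [basisE, basisF]

lemma Lv3_eq (i : ℤ) : Lv3 i = i • basisE 0 + basisF 0 := by
  ext (⟨k, j⟩ | k)
  · fin_cases k <;> fin_cases j <;> simp [Lv3, Lv, basisE, basisF]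
  · simp [Lv3, basisE, basisF]

lemma bf_Lv3_self (i : ℤ) : bf gram3 (Lv3 i) (Lv3 i) = 2 * i := by
  rw [Lv3_eq]
  simp [bf_gram3, Fin.sum_univ_three, basisE, basisF]
  ring

lemma bf_two_smul_sub_delta3_self (z : I7 → ℤ) :
    bf gram3 ((2 : ℤ) • z - delta3) ((2 : ℤ) • z - delta3) =
      4 * bf gram3 z z + 8 * z (.inr 0) - 2 := by
  simp only [bf_sub_left, bf_sub_right, bf_smul_left, bf_smul_right, bf_delta3,
    bf_comm gram3_isSymm delta3]
  simp [delta3]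
  ring

lemma HasDiv.dvd_apply_inl {v : I7 → ℤ} {d : ℤ} (hd : HasDiv gram3 v d) (p : Fin 2 × Fin 3) :
    d ∣ v (.inl p) := by
  obtain ⟨k, j⟩ := p
  fin_cases k
  · simpa using hd.2.1 (basisF j)
  · simpa using hd.2.1 (basisE j)

lemma HasDiv.eq_one_or_two {v : I7 → ℤ} {d : ℤ} (hv : IsPrimitive v) (hd : HasDiv gram3 v d) :
    d = 1 ∨ d = 2 := by
  have hcop : IsCoprime d (v (.inr 0)) := IsRelPrime.isCoprime fun s hsd hsc =>
    hv.isUnit_of_forall_dvd fun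
      | .inl p => hsd.trans (hd.dvd_apply_inl p)
      | .inr 0 => hsc
  have h2 : d ∣ 2 := hcop.dvd_of_dvd_mul_right (by simpa using hd.2.1 delta3)
  have := Int.le_of_dvd two_pos h2
  have := hd.1
  omega

/-- `w / 2` lies in the dual lattice, whose discriminant group is generated by `δ̂ / 2`. -/
lemma exists_eq_two_smul_sub_delta3 {w : I7 → ℤ} (hw : IsPrimitive w) (hd : HasDiv gram3 w 2) :
    ∃ z, w = (2 : ℤ) • z - delta3 := by
  have hodd : ¬ 2 ∣ w (.inr 0) := fun h2 => by
    have := hw.isUnit_of_forall_dvd fun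
      | .inl p => hd.dvd_apply_inl p
      | .inr 0 => h2
    rcases Int.isUnit_iff.1 this with h | h <;> omega
  have h2 : ∀ i, 2 ∣ w i + delta3 i := fun
    | .inl p => by simpa [delta3] using hd.dvd_apply_inl p
    | .inr 0 => by simp only [delta3, Sum.elim_inr, Pi.one_apply]; omega
  refine ⟨fun i => (w i + delta3 i) / 2, funext fun i => ?_⟩
  simp [Int.mul_ediv_cancel' (h2 i)]

lemma exists_oequiv_perp_basis (v : I7 → ℤ) :
    ∃ w, OEquiv gram3 v w ∧ bf gram3 w (basisE 0) = 0 ∧ bf gram3 w (basisF 0) = 0 :=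
  exists_oequiv_perp_hyperbolicPair gram3_isSymm (isHyperbolicPair_basis 1)
    (isHyperbolicPair_basis 0) (by rw [bf_basisE]; rfl) (by rw [bf_basisF]; rfl)
    (by rw [bf_basisE]; rfl) (by rw [bf_basisF]; rfl) v

lemma exists_oequiv_Lv3 {v : I7 → ℤ} (hd : HasDiv gram3 v 1) :
    ∃ i, bf gram3 v v = 2 * i ∧ OEquiv gram3 v (Lv3 i) := by
  obtain ⟨w, hvw, hwe, hwf⟩ := exists_oequiv_perp_basis v
  obtain ⟨y, hy⟩ := (hvw.hasDiv hd).exists_bf_eq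
  obtain ⟨n, hwn⟩ := exists_oequiv_smul_add_smul_add_sub gram3_isSymm even_bf_gram3_self
    (isHyperbolicPair_basis 0) hwe hwf hy hwe hwf
  have hn : n • basisE 0 + (1 : ℤ) • basisF 0 + (w - (1 : ℤ) • w) = Lv3 n := by
    rw [Lv3_eq]; module
  have hvn := hvw.trans (hn ▸ hwn)
  exact ⟨n, hvn.bf_self_eq ▸ bf_Lv3_self n, hvn⟩

lemma exists_oequiv_two_smul_Lv3_sub_delta3 {v : I7 → ℤ} (hv : IsPrimitive v)
    (hd : HasDiv gram3 v 2) :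
    ∃ i, bf gram3 v v = 8 * i - 2 ∧ OEquiv gram3 v (2 • Lv3 i - delta3) := by
  obtain ⟨w, hvw, hwe, hwf⟩ := exists_oequiv_perp_basis v
  obtain ⟨y, hy⟩ := (hvw.hasDiv hd).exists_bf_eq
  obtain ⟨z, rfl⟩ := exists_eq_two_smul_sub_delta3 (hvw.isPrimitive hv) (hvw.hasDiv hd)
  have hze : bf gram3 z (basisE 0) = 0 := by simp [delta3] at hwe ⊢; omega
  have hzf : bf gram3 z (basisF 0) = 0 := by simp [delta3] at hwf ⊢; omega
  obtain ⟨n, hwn⟩ := exists_oequiv_smul_add_smul_add_sub gram3_isSymm even_bf_gram3_self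
    (isHyperbolicPair_basis 0) hwe hwf hy hze hzf
  obtain ⟨m, hm⟩ := even_bf_gram3_self z
  set i := m + z (.inr 0)
  have hq : bf gram3 ((2 : ℤ) • z - delta3) ((2 : ℤ) • z - delta3) = 8 * i - 2 := by
    rw [bf_two_smul_sub_delta3_self, hm]; ring
  rw [show (2 : ℤ) • z - delta3 - (2 : ℤ) • z = -delta3 by abel] at hwn
  have hn : n = 2 * i := by
    have h := hwn.bf_self_eq
    rw [hq] at h
    simp [bf_gram3, Fin.sum_univ_three, basisE, basisF, delta3] at h
    linarith
  have hi : n • basisE 0 + (2 : ℤ) • basisF 0 + -delta3 = 2 • Lv3 i - delta3 := by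
    rw [Lv3_eq, hn]; module
  exact ⟨i, hvw.bf_self_eq ▸ hq, hvw.trans (hi ▸ hwn)⟩

end Lambda3

/-- The `O(Λ̂₃)`-orbit of a primitive element of `Λ̂₃ = U³ ⊕ (-2)` is uniquely determined by its
square and its divisibility.  More precisely: if `div(v) = 1` then `q(v)` is even and `v` can be
moved to `L_{q(v)/2}` by an isometry; if `div(v) = 2` then `q(v) ≡ -2 (mod 8)` and `v` can be
moved to `2L_i - δ̂` with `i = (q(v)+2)/8`. -/
theorem orbits_U3_minus2 (v : I7 → ℤ) (hv : IsPrimitive v) :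
    (∀ w : I7 → ℤ, IsPrimitive w → bf gram3 v v = bf gram3 w w →
      (∀ d : ℤ, HasDiv gram3 v d ↔ HasDiv gram3 w d) →
      ∃ φ : (I7 → ℤ) ≃ₗ[ℤ] (I7 → ℤ), IsIsometry gram3 φ ∧ φ v = w) ∧
    (HasDiv gram3 v 1 → ∃ i : ℤ, bf gram3 v v = 2 * i ∧
      ∃ φ : (I7 → ℤ) ≃ₗ[ℤ] (I7 → ℤ), IsIsometry gram3 φ ∧ φ v = Lv3 i) ∧
    (HasDiv gram3 v 2 → ∃ i : ℤ, bf gram3 v v = 8 * i - 2 ∧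
      ∃ φ : (I7 → ℤ) ≃ₗ[ℤ] (I7 → ℤ), IsIsometry gram3 φ ∧ φ v = 2 • Lv3 i - delta3) := by
  refine ⟨fun w hw hvw hdiv => ?_, exists_oequiv_Lv3, exists_oequiv_two_smul_Lv3_sub_delta3 hv⟩
  obtain ⟨d, hd⟩ := exists_hasDiv gram3_nondegenerate hv.1
  rcases hd.eq_one_or_two hv with rfl | rfl
  · obtain ⟨i, hi, hvi⟩ := exists_oequiv_Lv3 hd
    obtain ⟨j, hj, hwj⟩ := exists_oequiv_Lv3 ((hdiv 1).1 hd)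
    obtain rfl : i = j := by omega
    exact hvi.trans hwj.symm
  · obtain ⟨i, hi, hvi⟩ := exists_oequiv_two_smul_Lv3_sub_delta3 hv hd
    obtain ⟨j, hj, hwj⟩ := exists_oequiv_two_smul_Lv3_sub_delta3 hw ((hdiv 2).1 hd)
    obtain rfl : i = j := by omega
    exact hvi.trans hwj.symm
end

section
/- Let Λ' := U(2)³ ⊕ E8(−1) ⊕ (−4). Then every element D ∈ Λ' with div(D) = 2 has its E8(−1)-component divisible by 2 and satisfies q(D) ≡ 0 (mod 4). In particular, Λ' contains no element D with q(D) = −2 and div(D) = 2. -/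
open Matrix

/-- The index type of `Λ' = U(2)³ ⊕ E₈(-1) ⊕ (-4)`. -/
abbrev J15 := (Fin 2 × Fin 3) ⊕ (Fin 8 ⊕ Fin 1)

/-- The Gram matrix of `Λ' = U(2)³ ⊕ E₈(-1) ⊕ (-4)` (the orthogonal complement of `Σ'` in the
Beauville–Bogomolov lattice of Nikulin orbifolds). -/
def gramLambda' : Matrix J15 J15 ℤ :=
  Matrix.fromBlocks gramU2_3 0 0 (Matrix.fromBlocks gramE8 0 0 !![-4])
section Aux
variable {α : Type*} (a b c d e f g h : α)
lemma v8_0 : ![a,b,c,d,e,f,g,h] 0 = a := rfl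
lemma v8_1 : ![a,b,c,d,e,f,g,h] 1 = b := rfl
lemma v8_2 : ![a,b,c,d,e,f,g,h] 2 = c := rfl
lemma v8_3 : ![a,b,c,d,e,f,g,h] 3 = d := rfl
lemma v8_4 : ![a,b,c,d,e,f,g,h] 4 = e := rfl
lemma v8_5 : ![a,b,c,d,e,f,g,h] 5 = f := rfl
lemma v8_6 : ![a,b,c,d,e,f,g,h] 6 = g := rfl
lemma v8_7 : ![a,b,c,d,e,f,g,h] 7 = h := rfl
lemma v2_0 : ![a,b] 0 = a := rfl
lemma v2_1 : ![a,b] 1 = b := rfl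
lemma v1_0 : ![a] 0 = a := rfl
lemma m2_00 : !![a,b;c,d] 0 0 = a := rfl
lemma m2_01 : !![a,b;c,d] 0 1 = b := rfl
lemma m2_10 : !![a,b;c,d] 1 0 = c := rfl
lemma m2_11 : !![a,b;c,d] 1 1 = d := rfl
lemma m1_00 : !![a] 0 0 = a := rfl
end Aux

set_option maxHeartbeats 2000000 in
theorem bf_expand (x y : J15 → ℤ) : bf gramLambda' x y =
    2 * (x (Sum.inl (0,0)) * y (Sum.inl (1,0)) + x (Sum.inl (1,0)) * y (Sum.inl (0,0))
       + x (Sum.inl (0,1)) * y (Sum.inl (1,1)) + x (Sum.inl (1,1)) * y (Sum.inl (0,1))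
       + x (Sum.inl (0,2)) * y (Sum.inl (1,2)) + x (Sum.inl (1,2)) * y (Sum.inl (0,2)))
    + (x (Sum.inr (Sum.inl 0)) * (-2 * y (Sum.inr (Sum.inl 0)) + y (Sum.inr (Sum.inl 2)))
     + x (Sum.inr (Sum.inl 1)) * (-2 * y (Sum.inr (Sum.inl 1)) + y (Sum.inr (Sum.inl 3)))
     + x (Sum.inr (Sum.inl 2)) * (y (Sum.inr (Sum.inl 0)) - 2 * y (Sum.inr (Sum.inl 2)) + y (Sum.inr (Sum.inl 3)))
     + x (Sum.inr (Sum.inl 3)) * (y (Sum.inr (Sum.inl 1)) + y (Sum.inr (Sum.inl 2)) - 2 * y (Sum.inr (Sum.inl 3)) + y (Sum.inr (Sum.inl 4)))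
     + x (Sum.inr (Sum.inl 4)) * (y (Sum.inr (Sum.inl 3)) - 2 * y (Sum.inr (Sum.inl 4)) + y (Sum.inr (Sum.inl 5)))
     + x (Sum.inr (Sum.inl 5)) * (y (Sum.inr (Sum.inl 4)) - 2 * y (Sum.inr (Sum.inl 5)) + y (Sum.inr (Sum.inl 6)))
     + x (Sum.inr (Sum.inl 6)) * (y (Sum.inr (Sum.inl 5)) - 2 * y (Sum.inr (Sum.inl 6)) + y (Sum.inr (Sum.inl 7)))
     + x (Sum.inr (Sum.inl 7)) * (y (Sum.inr (Sum.inl 6)) - 2 * y (Sum.inr (Sum.inl 7))))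
    - 4 * x (Sum.inr (Sum.inr 0)) * y (Sum.inr (Sum.inr 0)) := by
  simp (config := { decide := true }) only [bf, gramLambda', gramU2_3, gramU, gramE8,
    CartanMatrix.E₈, Matrix.mulVec, dotProduct, Fintype.sum_sum_type,
    Fintype.sum_prod_type, Fin.sum_univ_two, Fin.sum_univ_three, Fin.sum_univ_eight,
    Fin.sum_univ_one, Matrix.fromBlocks_apply₁₁, Matrix.fromBlocks_apply₁₂,
    Matrix.fromBlocks_apply₂₁, Matrix.fromBlocks_apply₂₂, Matrix.blockDiagonal_apply,
    Matrix.smul_apply, Matrix.zero_apply, Matrix.neg_apply, smul_eq_mul, if_true, if_false, Matrix.of_apply,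
    v8_0, v8_1, v8_2, v8_3, v8_4, v8_5, v8_6, v8_7, m2_00, m2_01, m2_10, m2_11, m1_00, v2_0, v2_1, v1_0]
  ring

set_option maxHeartbeats 2000000 in
/-- Every element `D` of `Λ' = U(2)³ ⊕ E₈(-1) ⊕ (-4)` with `div(D) = 2` has its
`E₈(-1)`-component divisible by `2` and satisfies `q(D) ≡ 0 (mod 4)`.  In particular `Λ'`
contains no element with `q(D) = -2` and `div(D) = 2`. -/
theorem no_square_minus_two_div_two :
    (∀ D : J15 → ℤ, HasDiv gramLambda' D 2 →
      (∀ j, 2 ∣ D (Sum.inr (Sum.inl j))) ∧ (4 : ℤ) ∣ bf gramLambda' D D) ∧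
    ¬ ∃ D : J15 → ℤ, bf gramLambda' D D = -2 ∧ HasDiv gramLambda' D 2 := by
  have main : ∀ D : J15 → ℤ, HasDiv gramLambda' D 2 →
      (∀ j, 2 ∣ D (Sum.inr (Sum.inl j))) ∧ (4 : ℤ) ∣ bf gramLambda' D D := by
    intro D hD
    have hcol : ∀ j : J15, 2 ∣ bf gramLambda' D (Pi.single j 1) := fun j => hD.2.1 _
    have h0 := hcol (Sum.inr (Sum.inl 0))
    have h1 := hcol (Sum.inr (Sum.inl 1))
    have h2 := hcol (Sum.inr (Sum.inl 2))
    have h3 := hcol (Sum.inr (Sum.inl 3))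
    have h4 := hcol (Sum.inr (Sum.inl 4))
    have h5 := hcol (Sum.inr (Sum.inl 5))
    have h6 := hcol (Sum.inr (Sum.inl 6))
    have h7 := hcol (Sum.inr (Sum.inl 7))
    rw [bf_expand] at h0 h1 h2 h3 h4 h5 h6 h7
    simp (config := { decide := true }) only [Pi.single_apply, if_true, if_false, mul_zero,
      mul_one, zero_mul, one_mul, add_zero, zero_add, mul_neg, neg_zero, sub_zero, zero_sub,
      neg_neg] at h0 h1 h2 h3 h4 h5 h6 h7
    have k0 : 2 ∣ D (Sum.inr (Sum.inl 0)) := by omega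
    have k1 : 2 ∣ D (Sum.inr (Sum.inl 1)) := by omega
    have k2 : 2 ∣ D (Sum.inr (Sum.inl 2)) := by omega
    have k3 : 2 ∣ D (Sum.inr (Sum.inl 3)) := by omega
    have k4 : 2 ∣ D (Sum.inr (Sum.inl 4)) := by omega
    have k5 : 2 ∣ D (Sum.inr (Sum.inl 5)) := by omega
    have k6 : 2 ∣ D (Sum.inr (Sum.inl 6)) := by omega
    have k7 : 2 ∣ D (Sum.inr (Sum.inl 7)) := by omega
    have key : ∀ j, 2 ∣ D (Sum.inr (Sum.inl j)) := by
      intro j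
      fin_cases j
      exacts [k0, k1, k2, k3, k4, k5, k6, k7]
    refine ⟨key, ?_⟩
    obtain ⟨e0, he0⟩ := key 0
    obtain ⟨e1, he1⟩ := key 1
    obtain ⟨e2, he2⟩ := key 2
    obtain ⟨e3, he3⟩ := key 3
    obtain ⟨e4, he4⟩ := key 4
    obtain ⟨e5, he5⟩ := key 5
    obtain ⟨e6, he6⟩ := key 6
    obtain ⟨e7, he7⟩ := key 7
    rw [bf_expand, he0, he1, he2, he3, he4, he5, he6, he7]
    exact ⟨D (Sum.inl (0,0)) * D (Sum.inl (1,0)) + D (Sum.inl (0,1)) * D (Sum.inl (1,1))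
      + D (Sum.inl (0,2)) * D (Sum.inl (1,2))
      + (e0 * (-2*e0 + e2) + e1 * (-2*e1 + e3) + e2 * (e0 - 2*e2 + e3)
        + e3 * (e1 + e2 - 2*e3 + e4) + e4 * (e3 - 2*e4 + e5) + e5 * (e4 - 2*e5 + e6)
        + e6 * (e5 - 2*e6 + e7) + e7 * (e6 - 2*e7))
      - D (Sum.inr (Sum.inr 0)) * D (Sum.inr (Sum.inr 0)), by ring⟩
  refine ⟨main, ?_⟩
  rintro ⟨D, hq, hdiv⟩
  have := (main D hdiv).2
  rw [hq] at this
  omega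
end
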